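/- arXiv:2311.13943 — 3 statements merged into one kernel-verified Lean document; each statement's English description precedes it below -/
import Mathlib

section
/- Vertex deletion formula for permanental sums: if v is a vertex of a graph G, then PS(G) = PS(G − v) + Σ_{u ∈ N(v)} PS(G − v − u) + 2·Σ_{C ∈ 𝒞(v)} PS(G − V(C)), where 𝒞(v) is the set of cycles of G containing v. -/
open SimpleGraph Finset
open scoped Classical

set_option maxHeartbeats 1000000

noncomputable section

namespace PermSum

variable {V W : Type*}

/-- Number of cycle components of the spanning subgraph with edge set `M`:
components all of whose vertices have degree `2`. -/
noncomputable def numCycles [Fintype V] (M : Finset (Sym2 V)) : ℕ :=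
  Nat.card {c : (fromEdgeSet (↑M : Set (Sym2 V))).ConnectedComponent //
    ∀ v, (fromEdgeSet (↑M : Set (Sym2 V))).connectedComponentMk v = c →
      (fromEdgeSet (↑M : Set (Sym2 V))).degree v = 2}

/-- `M` is the edge set of a Sachs subgraph of `G`: each component of the graph it spans is a
single edge or a cycle (every covered vertex has degree 1 or 2, and any vertex of degree 1 has
its neighbours of degree 1). -/
def IsSachs [Fintype V] (G : SimpleGraph V) (M : Finset (Sym2 V)) : Prop :=
  (↑M : Set (Sym2 V)) ⊆ G.edgeSet ∧
  (∀ v ∈ (fromEdgeSet (↑M : Set (Sym2 V))).support,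
      (fromEdgeSet (↑M : Set (Sym2 V))).degree v = 1 ∨
      (fromEdgeSet (↑M : Set (Sym2 V))).degree v = 2) ∧
  (∀ v w, (fromEdgeSet (↑M : Set (Sym2 V))).Adj v w →
      (fromEdgeSet (↑M : Set (Sym2 V))).degree v = 1 →
      (fromEdgeSet (↑M : Set (Sym2 V))).degree w = 1)

/-- The permanental sum of a finite simple graph: `∑_H 2^{c(H)}` over all Sachs subgraphs `H`
(including the empty one). -/
noncomputable def PS [Fintype V] (G : SimpleGraph V) : ℕ :=
  ∑ M ∈ Finset.univ.filter (fun M : Finset (Sym2 V) => IsSachs G M), 2 ^ numCycles M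


/-- A subgraph is a cycle: connected and `2`-regular. -/
def IsCycleSubgraph [Fintype V] {G : SimpleGraph V} (H : G.Subgraph) : Prop :=
  H.coe.Connected ∧ ∀ v ∈ H.verts, H.degree v = 2

/-- Instance-free degree. -/
noncomputable def ndeg (G : SimpleGraph V) (v : V) : ℕ := Nat.card (G.neighborSet v)

lemma degree_eq_ndeg (G : SimpleGraph V) (v : V) [Fintype (G.neighborSet v)] :
    G.degree v = ndeg G v := by
  rw [← card_neighborSet_eq_degree, ndeg, Nat.card_eq_fintype_card]

lemma ndeg_congr {G G' : SimpleGraph V} (h : G = G') (v : V) : ndeg G v = ndeg G' v := by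
  rw [h]

lemma exists_adj_of_ndeg_ne_zero {G : SimpleGraph V} {v : V} (h : ndeg G v ≠ 0) :
    ∃ w, G.Adj v w := by
  by_contra hc
  push_neg at hc
  have he : G.neighborSet v = ∅ := by ext w; simp [hc w]
  rw [ndeg, he] at h
  simp at h

lemma ndeg_eq_zero_of_not_mem_support {G : SimpleGraph V} {v : V} (h : v ∉ G.support) :
    ndeg G v = 0 := by
  have he : G.neighborSet v = ∅ := by
    ext w
    simp only [mem_neighborSet, Set.mem_empty_iff_false, iff_false]
    exact fun ha => h ⟨w, ha⟩
  rw [ndeg, he]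
  simp

lemma mem_support_of_ndeg_ne_zero {G : SimpleGraph V} {v : V} (h : ndeg G v ≠ 0) :
    v ∈ G.support := by
  obtain ⟨w, hw⟩ := exists_adj_of_ndeg_ne_zero h
  exact ⟨w, hw⟩

/-- number of "cycle components" of a graph (instance-free version). -/
noncomputable def ncyc (G : SimpleGraph V) : ℕ :=
  Nat.card {c : G.ConnectedComponent //
    ∀ v, G.connectedComponentMk v = c → ndeg G v = 2}

lemma ncyc_congr {G G' : SimpleGraph V} (h : G = G') : ncyc G = ncyc G' := by
  rw [h]

lemma fromEdgeSet_image (f : W ↪ V) (M : Finset (Sym2 W)) :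
    fromEdgeSet (↑(M.image (Sym2.map f)) : Set (Sym2 V)) =
      SimpleGraph.map f (fromEdgeSet (↑M : Set (Sym2 W))) := by
  ext a b
  simp only [fromEdgeSet_adj, Finset.coe_image, Set.mem_image, Finset.mem_coe,
    SimpleGraph.map_adj]
  constructor
  · rintro ⟨⟨e, he, hme⟩, hab⟩
    induction e with
    | h u w =>
      rw [Sym2.map_pair_eq, Sym2.eq_iff] at hme
      rcases hme with ⟨rfl, rfl⟩ | ⟨rfl, rfl⟩
      · exact ⟨u, w, ⟨he, fun h => hab (by rw [h])⟩, rfl, rfl⟩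
      · exact ⟨w, u, ⟨Sym2.eq_swap ▸ he, fun h => hab (by rw [h])⟩, rfl, rfl⟩
  · rintro ⟨u, w, ⟨he, huw⟩, rfl, rfl⟩
    exact ⟨⟨s(u, w), he, by rw [Sym2.map_pair_eq]⟩, fun h => huw (f.injective (by
      simpa using h))⟩

lemma neighborSet_map (f : W ↪ V) (G : SimpleGraph W) (u : W) :
    (G.map f).neighborSet (f u) = f '' G.neighborSet u := by
  ext x
  simp only [mem_neighborSet, SimpleGraph.map_adj, Set.mem_image]
  constructor
  · rintro ⟨a, b, hab, ha, rfl⟩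
    exact ⟨b, by rwa [f.injective ha] at hab, rfl⟩
  · rintro ⟨b, hb, rfl⟩
    exact ⟨u, b, hb, rfl, rfl⟩

lemma neighborSet_map_of_not_range (f : W ↪ V) (G : SimpleGraph W) {x : V}
    (hx : x ∉ Set.range f) : (G.map f).neighborSet x = ∅ := by
  ext y
  simp only [mem_neighborSet, SimpleGraph.map_adj, Set.mem_empty_iff_false, iff_false]
  rintro ⟨a, b, hab, rfl, rfl⟩
  exact hx ⟨a, rfl⟩

lemma ndeg_map (f : W ↪ V) (G : SimpleGraph W) (u : W) :
    ndeg (G.map f) (f u) = ndeg G u := by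
  rw [ndeg, ndeg, neighborSet_map]
  exact Nat.card_image_of_injective f.injective _

lemma ndeg_map_of_not_range (f : W ↪ V) (G : SimpleGraph W) {x : V}
    (hx : x ∉ Set.range f) : ndeg (G.map f) x = 0 := by
  rw [ndeg, neighborSet_map_of_not_range f G hx]
  simp

/-- hom into the mapped graph -/
def mapHom (f : W ↪ V) (G : SimpleGraph W) : G →g G.map f :=
  ⟨f, fun h => ⟨f.injective.ne h.ne, _, _, h, rfl, rfl⟩⟩

lemma reachable_map_aux (f : W ↪ V) (G : SimpleGraph W) {x y : V}
    (p : (G.map f).Walk x y) : ∀ u : W, f u = x → ∃ w : W, f w = y ∧ G.Reachable u w := by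
  induction p with
  | nil => exact fun u hu => ⟨u, hu, Reachable.refl u⟩
  | cons h p ih =>
    rintro u rfl
    obtain ⟨-, a, b, hab, ha, hb⟩ := h
    obtain ⟨w, hw, hr⟩ := ih b hb
    exact ⟨w, hw, Reachable.trans ⟨Walk.cons (f.injective ha ▸ hab) Walk.nil⟩ hr⟩

lemma reachable_map_iff (f : W ↪ V) (G : SimpleGraph W) (u w : W) :
    (G.map f).Reachable (f u) (f w) ↔ G.Reachable u w := by
  constructor
  · rintro ⟨p⟩
    obtain ⟨w', hw', hr⟩ := reachable_map_aux f G p u rfl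
    rwa [f.injective hw'] at hr
  · exact fun h => h.map (mapHom f G)

lemma ncyc_map (f : W ↪ V) (G : SimpleGraph W) :
    ncyc (G.map f) = ncyc G := by
  symm
  apply Nat.card_congr
  refine Equiv.ofBijective
    (fun c => ⟨c.1.map (mapHom f G), ?_⟩) ⟨?_, ?_⟩
  · obtain ⟨c, hc⟩ := c
    obtain ⟨u, rfl⟩ : ∃ u, G.connectedComponentMk u = c := Quot.exists_rep c
    rintro x hx
    rw [ConnectedComponent.map_mk] at hx
    have hreach : (G.map f).Reachable (f u) x :=
      (ConnectedComponent.eq.mp hx).symm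
    obtain ⟨p⟩ := hreach
    obtain ⟨w, rfl, hr⟩ := reachable_map_aux f G p u rfl
    rw [ndeg_map f G w]
    exact hc w (ConnectedComponent.eq.mpr hr.symm)
  · rintro ⟨c, hc⟩ ⟨c', hc'⟩ h
    obtain ⟨u, rfl⟩ : ∃ u, G.connectedComponentMk u = c := Quot.exists_rep c
    obtain ⟨u', rfl⟩ : ∃ u, G.connectedComponentMk u = c' := Quot.exists_rep c'
    simp only [Subtype.mk.injEq, ConnectedComponent.map_mk, ConnectedComponent.eq] at h
    apply Subtype.ext
    dsimp only
    rw [ConnectedComponent.eq]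
    exact (reachable_map_iff f G u u').mp (by exact h)
  · rintro ⟨d, hd⟩
    obtain ⟨x, rfl⟩ : ∃ x, (G.map f).connectedComponentMk x = d := Quot.exists_rep d
    have hx : ndeg (G.map f) x = 2 := hd x rfl
    obtain ⟨y, hy⟩ := exists_adj_of_ndeg_ne_zero (by omega : ndeg (G.map f) x ≠ 0)
    obtain ⟨-, a, b, hab, rfl, rfl⟩ := hy
    refine ⟨⟨G.connectedComponentMk a, ?_⟩, ?_⟩
    · intro w hw
      have h2 : (G.map f).connectedComponentMk (f w) = (G.map f).connectedComponentMk (f a) := by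
        rw [ConnectedComponent.eq]
        exact ((ConnectedComponent.eq.mp hw).map (mapHom f G))
      rw [← ndeg_map f G]
      exact hd (f w) h2
    · apply Subtype.ext
      dsimp only
      rw [ConnectedComponent.map_mk]
      rfl

/-! ### Disjoint union lemmas -/

lemma support_sup (G₁ G₂ : SimpleGraph V) :
    (G₁ ⊔ G₂).support = G₁.support ∪ G₂.support := by
  ext x
  simp only [mem_support, sup_adj, Set.mem_union]
  constructor
  · rintro ⟨w, h | h⟩
    · exact Or.inl ⟨w, h⟩
    · exact Or.inr ⟨w, h⟩
  · rintro (⟨w, h⟩ | ⟨w, h⟩)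
    · exact ⟨w, Or.inl h⟩
    · exact ⟨w, Or.inr h⟩

lemma mem_support_of_reachable {G : SimpleGraph V} {x y : V} (h : G.Reachable x y)
    (hx : x ∈ G.support) : y ∈ G.support := by
  obtain ⟨p⟩ := h
  induction p with
  | nil => exact hx
  | cons h p ih => exact ih ⟨_, h.symm⟩

lemma adj_sup_left {G₁ G₂ : SimpleGraph V} (hd : Disjoint G₁.support G₂.support)
    {x y : V} (hx : x ∈ G₁.support) (h : (G₁ ⊔ G₂).Adj x y) : G₁.Adj x y := by
  rcases h with h | h
  · exact h
  · exact absurd ⟨y, h⟩ (Set.disjoint_left.mp hd hx)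

lemma reachable_sup_left {G₁ G₂ : SimpleGraph V} (hd : Disjoint G₁.support G₂.support)
    {x y : V} (hx : x ∈ G₁.support) (h : (G₁ ⊔ G₂).Reachable x y) : G₁.Reachable x y := by
  obtain ⟨p⟩ := h
  induction p with
  | nil => exact Reachable.refl _
  | cons h p ih =>
    rename_i a b c
    have h1 : G₁.Adj a b := adj_sup_left hd hx h
    exact Reachable.trans ⟨Walk.cons h1 Walk.nil⟩ (ih ⟨a, h1.symm⟩)

lemma reachable_sup_right {G₁ G₂ : SimpleGraph V} (hd : Disjoint G₁.support G₂.support)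
    {x y : V} (hx : x ∈ G₂.support) (h : (G₁ ⊔ G₂).Reachable x y) : G₂.Reachable x y := by
  apply reachable_sup_left hd.symm hx
  rwa [sup_comm G₂ G₁]

lemma ndeg_sup [Fintype V] {G₁ G₂ : SimpleGraph V} (hd : Disjoint G₁.support G₂.support)
    (x : V) : ndeg (G₁ ⊔ G₂) x = ndeg G₁ x + ndeg G₂ x := by
  have hns : (G₁ ⊔ G₂).neighborSet x = G₁.neighborSet x ∪ G₂.neighborSet x := by
    ext y; simp [sup_adj]
  have hdisj : Disjoint (G₁.neighborSet x) (G₂.neighborSet x) := by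
    rw [Set.disjoint_left]
    intro y hy1 hy2
    exact Set.disjoint_left.mp hd ⟨x, (mem_neighborSet _ _ _ |>.mp hy1).symm⟩
      ⟨x, (mem_neighborSet _ _ _ |>.mp hy2).symm⟩
  rw [ndeg, ndeg, ndeg, Nat.card_coe_set_eq, Nat.card_coe_set_eq,
    Nat.card_coe_set_eq, hns, Set.ncard_union_eq hdisj (Set.toFinite _) (Set.toFinite _)]

lemma ncyc_sup [Fintype V] {G₁ G₂ : SimpleGraph V} (hd : Disjoint G₁.support G₂.support) :
    ncyc (G₁ ⊔ G₂) = ncyc G₁ + ncyc G₂ := by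
  rw [ncyc, ncyc, ncyc, ← Nat.card_sum]
  apply Nat.card_congr
  symm
  have key : ∀ (u : V), u ∈ G₁.support →
      (∀ w, G₁.connectedComponentMk w = G₁.connectedComponentMk u → ndeg G₁ w = 2) →
      (∀ x, (G₁ ⊔ G₂).connectedComponentMk x = (G₁ ⊔ G₂).connectedComponentMk u →
        ndeg (G₁ ⊔ G₂) x = 2) := by
    intro u hu hall x hx
    have hr : G₁.Reachable u x := reachable_sup_left hd hu (ConnectedComponent.eq.mp hx).symm
    have hxs : x ∈ G₁.support := mem_support_of_reachable hr hu
    have h1 : ndeg G₁ x = 2 := hall x (ConnectedComponent.eq.mpr hr.symm)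
    have h2 : ndeg G₂ x = 0 :=
      ndeg_eq_zero_of_not_mem_support (Set.disjoint_left.mp hd hxs)
    rw [ndeg_sup hd, h1, h2]
  have key2 : ∀ (u : V), u ∈ G₂.support →
      (∀ w, G₂.connectedComponentMk w = G₂.connectedComponentMk u → ndeg G₂ w = 2) →
      (∀ x, (G₁ ⊔ G₂).connectedComponentMk x = (G₁ ⊔ G₂).connectedComponentMk u →
        ndeg (G₁ ⊔ G₂) x = 2) := by
    intro u hu hall x hx
    have hr : G₂.Reachable u x := reachable_sup_right hd hu (ConnectedComponent.eq.mp hx).symm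
    have hxs : x ∈ G₂.support := mem_support_of_reachable hr hu
    have h1 : ndeg G₂ x = 2 := hall x (ConnectedComponent.eq.mpr hr.symm)
    have h2 : ndeg G₁ x = 0 :=
      ndeg_eq_zero_of_not_mem_support (Set.disjoint_right.mp hd hxs)
    rw [ndeg_sup hd, h1, h2]
  -- support membership of reps
  have hsupp1 : ∀ (c : {c : G₁.ConnectedComponent //
      ∀ v, G₁.connectedComponentMk v = c → ndeg G₁ v = 2}) (u : V),
      G₁.connectedComponentMk u = c.1 → u ∈ G₁.support := by
    rintro ⟨c, hc⟩ u hu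
    exact mem_support_of_ndeg_ne_zero (by rw [hc u hu]; omega)
  have hsupp2 : ∀ (c : {c : G₂.ConnectedComponent //
      ∀ v, G₂.connectedComponentMk v = c → ndeg G₂ v = 2}) (u : V),
      G₂.connectedComponentMk u = c.1 → u ∈ G₂.support := by
    rintro ⟨c, hc⟩ u hu
    exact mem_support_of_ndeg_ne_zero (by rw [hc u hu]; omega)
  refine Equiv.ofBijective (Sum.elim
    (fun c => ⟨c.1.map (Hom.ofLE le_sup_left), ?_⟩)
    (fun c => ⟨c.1.map (Hom.ofLE le_sup_right), ?_⟩)) ⟨?_, ?_⟩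
  · obtain ⟨c, hc⟩ := c
    obtain ⟨u, rfl⟩ : ∃ u, G₁.connectedComponentMk u = c := Quot.exists_rep c
    rw [ConnectedComponent.map_mk]
    exact key u (hsupp1 ⟨_, hc⟩ u rfl) hc
  · obtain ⟨c, hc⟩ := c
    obtain ⟨u, rfl⟩ : ∃ u, G₂.connectedComponentMk u = c := Quot.exists_rep c
    rw [ConnectedComponent.map_mk]
    exact key2 u (hsupp2 ⟨_, hc⟩ u rfl) hc
  · rintro (⟨c, hc⟩ | ⟨c, hc⟩) (⟨c', hc'⟩ | ⟨c', hc'⟩) h <;>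
      [skip; skip; skip; skip]
    · obtain ⟨u, rfl⟩ : ∃ u, G₁.connectedComponentMk u = c := Quot.exists_rep c
      obtain ⟨u', rfl⟩ : ∃ u, G₁.connectedComponentMk u = c' := Quot.exists_rep c'
      simp only [Sum.elim_inl, Subtype.mk.injEq, ConnectedComponent.map_mk,
        ConnectedComponent.eq] at h
      have := reachable_sup_left hd (hsupp1 ⟨_, hc⟩ u rfl) h
      simp only [Sum.inl.injEq]
      exact Subtype.ext (ConnectedComponent.eq.mpr this)
    · obtain ⟨u, rfl⟩ : ∃ u, G₁.connectedComponentMk u = c := Quot.exists_rep c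
      obtain ⟨u', rfl⟩ : ∃ u, G₂.connectedComponentMk u = c' := Quot.exists_rep c'
      simp only [Sum.elim_inl, Sum.elim_inr, Subtype.mk.injEq, ConnectedComponent.map_mk,
        ConnectedComponent.eq] at h
      have hr := reachable_sup_left hd (hsupp1 ⟨_, hc⟩ u rfl) h
      have : u' ∈ G₁.support := mem_support_of_reachable hr (hsupp1 ⟨_, hc⟩ u rfl)
      exact absurd (hsupp2 ⟨_, hc'⟩ u' rfl) (Set.disjoint_left.mp hd this)
    · obtain ⟨u, rfl⟩ : ∃ u, G₂.connectedComponentMk u = c := Quot.exists_rep c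
      obtain ⟨u', rfl⟩ : ∃ u, G₁.connectedComponentMk u = c' := Quot.exists_rep c'
      simp only [Sum.elim_inl, Sum.elim_inr, Subtype.mk.injEq, ConnectedComponent.map_mk,
        ConnectedComponent.eq] at h
      have hr := reachable_sup_right hd (hsupp2 ⟨_, hc⟩ u rfl) h
      have : u' ∈ G₂.support := mem_support_of_reachable hr (hsupp2 ⟨_, hc⟩ u rfl)
      exact absurd (hsupp1 ⟨_, hc'⟩ u' rfl) (Set.disjoint_right.mp hd this)
    · obtain ⟨u, rfl⟩ : ∃ u, G₂.connectedComponentMk u = c := Quot.exists_rep c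
      obtain ⟨u', rfl⟩ : ∃ u, G₂.connectedComponentMk u = c' := Quot.exists_rep c'
      simp only [Sum.elim_inr, Subtype.mk.injEq, ConnectedComponent.map_mk,
        ConnectedComponent.eq] at h
      have := reachable_sup_right hd (hsupp2 ⟨_, hc⟩ u rfl) h
      simp only [Sum.inr.injEq]
      exact Subtype.ext (ConnectedComponent.eq.mpr this)
  · rintro ⟨d, hd2⟩
    obtain ⟨x, rfl⟩ : ∃ x, (G₁ ⊔ G₂).connectedComponentMk x = d := Quot.exists_rep d
    have hx2 : ndeg (G₁ ⊔ G₂) x = 2 := hd2 x rfl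
    have hxs : x ∈ (G₁ ⊔ G₂).support := mem_support_of_ndeg_ne_zero (by omega)
    rw [support_sup] at hxs
    rcases hxs with hxs | hxs
    · refine ⟨Sum.inl ⟨G₁.connectedComponentMk x, ?_⟩, ?_⟩
      · intro w hw
        have hr : G₁.Reachable x w := ConnectedComponent.eq.mp hw.symm
        have hws : w ∈ G₁.support := mem_support_of_reachable hr hxs
        have hsup : (G₁ ⊔ G₂).connectedComponentMk w = (G₁ ⊔ G₂).connectedComponentMk x :=
          ConnectedComponent.eq.mpr (hr.symm.map (Hom.ofLE le_sup_left) : (G₁ ⊔ G₂).Reachable w x)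
        have := hd2 w hsup
        rw [ndeg_sup hd, ndeg_eq_zero_of_not_mem_support
          (Set.disjoint_left.mp hd hws)] at this
        omega
      · simp only [Sum.elim_inl]
        exact Subtype.ext rfl
    · refine ⟨Sum.inr ⟨G₂.connectedComponentMk x, ?_⟩, ?_⟩
      · intro w hw
        have hr : G₂.Reachable x w := ConnectedComponent.eq.mp hw.symm
        have hws : w ∈ G₂.support := mem_support_of_reachable hr hxs
        have hsup : (G₁ ⊔ G₂).connectedComponentMk w = (G₁ ⊔ G₂).connectedComponentMk x :=
          ConnectedComponent.eq.mpr (hr.symm.map (Hom.ofLE le_sup_right) : (G₁ ⊔ G₂).Reachable w x)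
        have := hd2 w hsup
        rw [ndeg_sup hd, ndeg_eq_zero_of_not_mem_support
          (Set.disjoint_right.mp hd hws)] at this
        omega
      · simp only [Sum.elim_inr]
        exact Subtype.ext rfl

lemma ncyc_eq_zero {G : SimpleGraph V} (h : ∀ v, ndeg G v ≤ 1) : ncyc G = 0 := by
  rw [ncyc]
  have : IsEmpty {c : G.ConnectedComponent //
      ∀ v, G.connectedComponentMk v = c → ndeg G v = 2} := by
    constructor
    rintro ⟨c, hc⟩
    obtain ⟨u, rfl⟩ : ∃ u, G.connectedComponentMk u = c := Quot.exists_rep c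
    have := hc u rfl
    have := h u
    omega
  exact Nat.card_of_isEmpty

lemma ncyc_eq_one {G : SimpleGraph V} {v₀ : V} (hv₀ : v₀ ∈ G.support)
    (hconn : ∀ x, x ∈ G.support → G.Reachable v₀ x)
    (hdeg : ∀ x ∈ G.support, ndeg G x = 2) : ncyc G = 1 := by
  rw [ncyc]
  rw [Nat.card_eq_one_iff_unique]
  constructor
  · constructor
    rintro ⟨c, hc⟩ ⟨c', hc'⟩
    obtain ⟨u, rfl⟩ : ∃ u, G.connectedComponentMk u = c := Quot.exists_rep c
    obtain ⟨u', rfl⟩ : ∃ u, G.connectedComponentMk u = c' := Quot.exists_rep c'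
    have hu : u ∈ G.support := mem_support_of_ndeg_ne_zero (by rw [hc u rfl]; omega)
    have hu' : u' ∈ G.support := mem_support_of_ndeg_ne_zero (by rw [hc' u' rfl]; omega)
    exact Subtype.ext (ConnectedComponent.eq.mpr ((hconn u hu).symm.trans (hconn u' hu')))
  · refine ⟨⟨G.connectedComponentMk v₀, ?_⟩⟩
    intro w hw
    have hr : G.Reachable w v₀ := ConnectedComponent.eq.mp hw
    exact hdeg w (mem_support_of_reachable hr.symm hv₀)

/-! ### Bridging to the given definitions -/

/-- instance-free reformulation of `IsSachs`. -/
def IsSachs' (G : SimpleGraph V) (M : Finset (Sym2 V)) : Prop :=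
  (↑M : Set (Sym2 V)) ⊆ G.edgeSet ∧
  (∀ v ∈ (fromEdgeSet (↑M : Set (Sym2 V))).support,
      ndeg (fromEdgeSet (↑M : Set (Sym2 V))) v = 1 ∨
      ndeg (fromEdgeSet (↑M : Set (Sym2 V))) v = 2) ∧
  (∀ v w, (fromEdgeSet (↑M : Set (Sym2 V))).Adj v w →
      ndeg (fromEdgeSet (↑M : Set (Sym2 V))) v = 1 →
      ndeg (fromEdgeSet (↑M : Set (Sym2 V))) w = 1)

lemma isSachs_iff [Fintype V] (G : SimpleGraph V) (M : Finset (Sym2 V)) :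
    IsSachs G M ↔ IsSachs' G M := by
  unfold IsSachs IsSachs'
  simp only [degree_eq_ndeg]

lemma numCycles_eq_ncyc [Fintype V] (M : Finset (Sym2 V)) :
    numCycles M = ncyc (fromEdgeSet (↑M : Set (Sym2 V))) := by
  apply Nat.card_congr
  apply Equiv.subtypeEquivRight
  intro c
  constructor <;> intro h w hw <;> have := h w hw
  · rwa [degree_eq_ndeg] at this
  · rwa [degree_eq_ndeg]

lemma no_diag_of_subset_edgeSet {G : SimpleGraph V} {M : Finset (Sym2 V)}
    (h : (↑M : Set (Sym2 V)) ⊆ G.edgeSet) {a : V} : s(a, a) ∉ M := by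
  intro hmem
  exact G.irrefl (G.mem_edgeSet.mp (h hmem))

lemma adj_fromEdgeSet_of_mem {M : Finset (Sym2 V)} {a b : V} (hne : a ≠ b)
    (h : s(a, b) ∈ M) : (fromEdgeSet (↑M : Set (Sym2 V))).Adj a b := by
  rw [fromEdgeSet_adj]
  exact ⟨h, hne⟩

/-! ### Transfer lemma for induced subgraphs -/

section Transfer

variable [Fintype V] (G : SimpleGraph V) (s : Set V)

/-- the coercion embedding -/
abbrev emb (s : Set V) : ↥s ↪ V := Function.Embedding.subtype _

lemma inside_image (M : Finset (Sym2 ↥s)) :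
    ∀ e ∈ M.image (Sym2.map (emb s)), ∀ x ∈ e, x ∈ s := by
  intro e he x hx
  obtain ⟨e', _, rfl⟩ := Finset.mem_image.mp he
  obtain ⟨y, hy, rfl⟩ := Sym2.mem_map.mp hx
  exact y.2

lemma isSachs_image_iff (M : Finset (Sym2 ↥s)) :
    IsSachs' G (M.image (Sym2.map (emb s))) ↔ IsSachs' (G.induce s) M := by
  have hfe := fromEdgeSet_image (emb s) M
  constructor
  · rintro ⟨h1, h2, h3⟩
    refine ⟨?_, ?_, ?_⟩
    · rintro e he
      induction e with
      | h a b =>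
        have hm : Sym2.map (emb s) s(a, b) ∈ M.image (Sym2.map (emb s)) :=
          Finset.mem_image_of_mem _ he
        have h2' := h1 hm
        rw [Sym2.map_pair_eq] at h2'
        have : G.Adj ↑a ↑b := G.mem_edgeSet.mp h2'
        exact (G.induce s).mem_edgeSet.mp ((G.induce s).mem_edgeSet.mpr this)
    · intro a ha
      obtain ⟨b, hb⟩ := (SimpleGraph.mem_support _).mp ha
      have hadj : (fromEdgeSet (↑(M.image (Sym2.map (emb s))) : Set (Sym2 V))).Adj
          (emb s a) (emb s b) := by
        rw [hfe]
        exact (mapHom (emb s) _).map_adj hb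
      have hsup : (emb s a) ∈ (fromEdgeSet
          (↑(M.image (Sym2.map (emb s))) : Set (Sym2 V))).support := ⟨_, hadj⟩
      have := h2 _ hsup
      rwa [ndeg_congr hfe, ndeg_map] at this
    · intro a b hab h1'
      have hadj : (fromEdgeSet (↑(M.image (Sym2.map (emb s))) : Set (Sym2 V))).Adj
          (emb s a) (emb s b) := by
        rw [hfe]; exact (mapHom (emb s) _).map_adj hab
      have := h3 _ _ hadj (by rwa [ndeg_congr hfe, ndeg_map])
      rwa [ndeg_congr hfe, ndeg_map] at this
  · rintro ⟨h1, h2, h3⟩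
    refine ⟨?_, ?_, ?_⟩
    · rintro e he
      rw [Finset.coe_image, Set.mem_image] at he
      obtain ⟨e', he', rfl⟩ := he
      induction e' with
      | h a b =>
        have hadj : (G.induce s).Adj a b := (G.induce s).mem_edgeSet.mp (h1 he')
        rw [Sym2.map_pair_eq]
        exact G.mem_edgeSet.mpr hadj
    · intro x hx
      obtain ⟨y, hy⟩ := hx
      rw [hfe] at hy
      obtain ⟨-, a, b, hab, rfl, rfl⟩ := hy
      have := h2 a ⟨b, hab⟩
      rwa [ndeg_congr hfe, ndeg_map (emb s)]
    · intro x y hxy hx1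
      rw [hfe] at hxy
      obtain ⟨-, a, b, hab, rfl, rfl⟩ := hxy
      rw [ndeg_congr hfe, ndeg_map (emb s)] at hx1 ⊢
      exact h3 a b hab hx1

lemma PS_induce_eq_sum [Fintype ↥s] :
    PS (G.induce s) = ∑ N ∈ Finset.univ.filter (fun N : Finset (Sym2 V) =>
      IsSachs G N ∧ ∀ e ∈ N, ∀ x ∈ e, x ∈ s), 2 ^ numCycles N := by
  classical
  rw [PS]
  refine Finset.sum_nbij (fun M => M.image (Sym2.map (emb s))) ?_ ?_ ?_ ?_
  · intro M hM
    rw [Finset.mem_filter] at hM ⊢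
    rw [isSachs_iff] at hM ⊢
    exact ⟨Finset.mem_univ _, (isSachs_image_iff G s M).mpr hM.2, inside_image s M⟩
  · intro M1 h1 M2 h2 h
    replace h : M1.image (Sym2.map (emb s)) = M2.image (Sym2.map (emb s)) := h
    exact Finset.image_injective (Sym2.map.injective (emb s).injective) h
  · intro N hN
    rw [Finset.coe_filter, Set.mem_setOf_eq] at hN
    obtain ⟨-, hNs, hNin⟩ := hN
    have himg : (Finset.univ.filter (fun e' => Sym2.map (emb s) e' ∈ N)).image
        (Sym2.map (emb s)) = N := by
      ext e
      constructor
      · intro he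
        obtain ⟨e', he', rfl⟩ := Finset.mem_image.mp he
        exact (Finset.mem_filter.mp he').2
      · intro he
        induction e with
        | h a b =>
          have ha : a ∈ s := hNin _ he a (Sym2.mem_mk_left a b)
          have hb : b ∈ s := hNin _ he b (Sym2.mem_mk_right a b)
          have : Sym2.map (emb s) s((⟨a, ha⟩ : ↥s), (⟨b, hb⟩ : ↥s)) = s(a, b) := by
            rw [Sym2.map_pair_eq]; rfl
          refine Finset.mem_image.mpr ⟨s((⟨a, ha⟩ : ↥s), (⟨b, hb⟩ : ↥s)), ?_, this⟩
          exact Finset.mem_filter.mpr ⟨Finset.mem_univ _, by rw [this]; exact he⟩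
    refine ⟨Finset.univ.filter (fun e' => Sym2.map (emb s) e' ∈ N), ?_, himg⟩
    rw [Finset.coe_filter, Set.mem_setOf_eq]
    refine ⟨Finset.mem_univ _, ?_⟩
    rw [isSachs_iff, ← isSachs_image_iff G s, himg]
    rwa [isSachs_iff] at hNs
  · intro M hM
    rw [numCycles_eq_ncyc, numCycles_eq_ncyc, fromEdgeSet_image, ncyc_map]

end Transfer

/-! ### Union lemmas for Sachs sets -/

section UnionLemmas

variable {G : SimpleGraph V} {A B : Finset (Sym2 V)}

lemma fromEdgeSet_coe_union (A B : Finset (Sym2 V)) :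
    fromEdgeSet (↑(A ∪ B) : Set (Sym2 V)) =
      fromEdgeSet (↑A : Set (Sym2 V)) ⊔ fromEdgeSet (↑B : Set (Sym2 V)) := by
  rw [Finset.coe_union, fromEdgeSet_union]

lemma ndeg_union_left [Fintype V]
    (hd : Disjoint (fromEdgeSet (↑A : Set (Sym2 V))).support
      (fromEdgeSet (↑B : Set (Sym2 V))).support)
    {x : V} (hx : x ∉ (fromEdgeSet (↑B : Set (Sym2 V))).support) :
    ndeg (fromEdgeSet (↑(A ∪ B) : Set (Sym2 V))) x =
      ndeg (fromEdgeSet (↑A : Set (Sym2 V))) x := by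
  rw [ndeg_congr (fromEdgeSet_coe_union A B), ndeg_sup hd,
    ndeg_eq_zero_of_not_mem_support hx, add_zero]

lemma ndeg_union_right [Fintype V]
    (hd : Disjoint (fromEdgeSet (↑A : Set (Sym2 V))).support
      (fromEdgeSet (↑B : Set (Sym2 V))).support)
    {x : V} (hx : x ∉ (fromEdgeSet (↑A : Set (Sym2 V))).support) :
    ndeg (fromEdgeSet (↑(A ∪ B) : Set (Sym2 V))) x =
      ndeg (fromEdgeSet (↑B : Set (Sym2 V))) x := by
  rw [ndeg_congr (fromEdgeSet_coe_union A B), ndeg_sup hd,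
    ndeg_eq_zero_of_not_mem_support hx, zero_add]

lemma mem_support_left_of_adj {x y : V}
    (h : (fromEdgeSet (↑A : Set (Sym2 V))).Adj x y) :
    x ∈ (fromEdgeSet (↑A : Set (Sym2 V))).support := ⟨y, h⟩

lemma isSachs'_union [Fintype V]
    (hd : Disjoint (fromEdgeSet (↑A : Set (Sym2 V))).support
      (fromEdgeSet (↑B : Set (Sym2 V))).support)
    (hA : IsSachs' G A) (hB : IsSachs' G B) : IsSachs' G (A ∪ B) := by
  obtain ⟨hA1, hA2, hA3⟩ := hA
  obtain ⟨hB1, hB2, hB3⟩ := hB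
  refine ⟨?_, ?_, ?_⟩
  · rw [Finset.coe_union]
    exact Set.union_subset hA1 hB1
  · intro x hx
    have hx' : x ∈ (fromEdgeSet (↑A : Set (Sym2 V)) ⊔ fromEdgeSet (↑B : Set (Sym2 V))).support := by
      rw [← fromEdgeSet_coe_union]; exact hx
    rw [support_sup, Set.mem_union] at hx'
    rcases hx' with hx1 | hx1
    · rw [ndeg_union_left hd (Set.disjoint_left.mp hd hx1)]
      exact hA2 x hx1
    · rw [ndeg_union_right hd (Set.disjoint_right.mp hd hx1)]
      exact hB2 x hx1
  · intro x y hxy h1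
    have hxy' : (fromEdgeSet (↑A : Set (Sym2 V)) ⊔ fromEdgeSet (↑B : Set (Sym2 V))).Adj x y := by
      rw [← fromEdgeSet_coe_union]; exact hxy
    rcases hxy' with h | h
    · have hx := mem_support_left_of_adj h
      have hy : y ∈ (fromEdgeSet (↑A : Set (Sym2 V))).support := ⟨x, h.symm⟩
      rw [ndeg_union_left hd (Set.disjoint_left.mp hd hx)] at h1
      rw [ndeg_union_left hd (Set.disjoint_left.mp hd hy)]
      exact hA3 x y h h1
    · have hx : x ∈ (fromEdgeSet (↑B : Set (Sym2 V))).support := ⟨y, h⟩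
      have hy : y ∈ (fromEdgeSet (↑B : Set (Sym2 V))).support := ⟨x, h.symm⟩
      rw [ndeg_union_right hd (Set.disjoint_right.mp hd hx)] at h1
      rw [ndeg_union_right hd (Set.disjoint_right.mp hd hy)]
      exact hB3 x y h h1

lemma isSachs'_of_union_left [Fintype V]
    (hd : Disjoint (fromEdgeSet (↑A : Set (Sym2 V))).support
      (fromEdgeSet (↑B : Set (Sym2 V))).support)
    (h : IsSachs' G (A ∪ B)) : IsSachs' G A := by
  obtain ⟨h1, h2, h3⟩ := h
  have hle : fromEdgeSet (↑A : Set (Sym2 V)) ≤ fromEdgeSet (↑(A ∪ B) : Set (Sym2 V)) :=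
    fromEdgeSet_mono (by rw [Finset.coe_union]; exact Set.subset_union_left)
  refine ⟨?_, ?_, ?_⟩
  · exact fun e he => h1 (by rw [Finset.coe_union]; exact Set.mem_union_left _ he)
  · intro x hx
    have hx' : x ∈ (fromEdgeSet (↑(A ∪ B) : Set (Sym2 V))).support := support_mono hle hx
    have := h2 x hx'
    rwa [ndeg_union_left hd (Set.disjoint_left.mp hd hx)] at this
  · intro x y hxy hx1
    have hx := mem_support_left_of_adj hxy
    have hy : y ∈ (fromEdgeSet (↑A : Set (Sym2 V))).support := ⟨x, hxy.symm⟩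
    have := h3 x y (hle hxy)
      (by rwa [ndeg_union_left hd (Set.disjoint_left.mp hd hx)])
    rwa [ndeg_union_left hd (Set.disjoint_left.mp hd hy)] at this

lemma isSachs'_of_union_right [Fintype V]
    (hd : Disjoint (fromEdgeSet (↑A : Set (Sym2 V))).support
      (fromEdgeSet (↑B : Set (Sym2 V))).support)
    (h : IsSachs' G (A ∪ B)) : IsSachs' G B :=
  isSachs'_of_union_left hd.symm (by rwa [Finset.union_comm])

end UnionLemmas

/-! ### Single edge graphs -/

section SingleEdge

variable {v u : V}

lemma singleEdge_adj (hvu : v ≠ u) {x y : V} :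
    (fromEdgeSet (↑({s(v, u)} : Finset (Sym2 V)) : Set (Sym2 V))).Adj x y ↔
      (x = v ∧ y = u) ∨ (x = u ∧ y = v) := by
  rw [fromEdgeSet_adj]
  simp only [Finset.coe_singleton, Set.mem_singleton_iff, Sym2.eq_iff]
  constructor
  · rintro ⟨(⟨rfl, rfl⟩ | ⟨rfl, rfl⟩), hne⟩
    · exact Or.inl ⟨rfl, rfl⟩
    · exact Or.inr ⟨rfl, rfl⟩
  · rintro (⟨rfl, rfl⟩ | ⟨rfl, rfl⟩)
    · exact ⟨Or.inl ⟨rfl, rfl⟩, hvu⟩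
    · exact ⟨Or.inr ⟨rfl, rfl⟩, hvu.symm⟩

lemma singleEdge_support (hvu : v ≠ u) :
    (fromEdgeSet (↑({s(v, u)} : Finset (Sym2 V)) : Set (Sym2 V))).support = {v, u} := by
  ext x
  simp only [mem_support, Set.mem_insert_iff, Set.mem_singleton_iff]
  constructor
  · rintro ⟨y, hy⟩
    rw [singleEdge_adj hvu] at hy
    rcases hy with ⟨rfl, rfl⟩ | ⟨rfl, rfl⟩
    · exact Or.inl rfl
    · exact Or.inr rfl
  · rintro (rfl | rfl)
    · exact ⟨u, (singleEdge_adj hvu).mpr (Or.inl ⟨rfl, rfl⟩)⟩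
    · exact ⟨v, (singleEdge_adj hvu).mpr (Or.inr ⟨rfl, rfl⟩)⟩

lemma singleEdge_neighborSet_v (hvu : v ≠ u) :
    (fromEdgeSet (↑({s(v, u)} : Finset (Sym2 V)) : Set (Sym2 V))).neighborSet v = {u} := by
  ext y
  constructor
  · intro hy
    rcases (singleEdge_adj hvu).mp hy with ⟨-, h⟩ | ⟨hv, -⟩
    · exact h
    · exact absurd hv hvu
  · intro hy
    have hyu : y = u := hy
    subst hyu
    exact (singleEdge_adj hvu).mpr (Or.inl ⟨rfl, rfl⟩)

lemma singleEdge_ndeg_le_one (hvu : v ≠ u) (x : V) :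
    ndeg (fromEdgeSet (↑({s(v, u)} : Finset (Sym2 V)) : Set (Sym2 V))) x ≤ 1 := by
  rw [ndeg, Nat.card_coe_set_eq]
  have : (fromEdgeSet (↑({s(v, u)} : Finset (Sym2 V)) : Set (Sym2 V))).neighborSet x ⊆
      {if x = v then u else v} := by
    intro y hy
    rw [mem_neighborSet, singleEdge_adj hvu] at hy
    rcases hy with ⟨rfl, rfl⟩ | ⟨rfl, rfl⟩
    · simp
    · simp [hvu.symm]
  calc _ ≤ ({if x = v then u else v} : Set V).ncard :=
        Set.ncard_le_ncard this (Set.finite_singleton _)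
    _ = 1 := Set.ncard_singleton _

lemma singleEdge_ndeg_v (hvu : v ≠ u) :
    ndeg (fromEdgeSet (↑({s(v, u)} : Finset (Sym2 V)) : Set (Sym2 V))) v = 1 := by
  rw [ndeg, singleEdge_neighborSet_v hvu, Nat.card_coe_set_eq, Set.ncard_singleton]

lemma singleEdge_comm : ({s(v, u)} : Finset (Sym2 V)) = {s(u, v)} := by
  rw [Sym2.eq_swap]

lemma singleEdge_ndeg_u (hvu : v ≠ u) :
    ndeg (fromEdgeSet (↑({s(v, u)} : Finset (Sym2 V)) : Set (Sym2 V))) u = 1 := by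
  rw [singleEdge_comm]
  exact singleEdge_ndeg_v hvu.symm

lemma singleEdge_isSachs' {G : SimpleGraph V} (hadj : G.Adj v u) :
    IsSachs' G ({s(v, u)} : Finset (Sym2 V)) := by
  have hvu := hadj.ne
  refine ⟨?_, ?_, ?_⟩
  · intro e he
    rw [Finset.coe_singleton, Set.mem_singleton_iff] at he
    subst he
    exact G.mem_edgeSet.mpr hadj
  · intro x hx
    rw [singleEdge_support hvu] at hx
    rcases hx with rfl | rfl
    · exact Or.inl (singleEdge_ndeg_v hvu)
    · exact Or.inl (singleEdge_ndeg_u hvu)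
  · intro x y hxy _
    rw [singleEdge_adj hvu] at hxy
    rcases hxy with ⟨-, rfl⟩ | ⟨-, rfl⟩
    · exact singleEdge_ndeg_u hvu
    · exact singleEdge_ndeg_v hvu

lemma singleEdge_ncyc (hvu : v ≠ u) :
    ncyc (fromEdgeSet (↑({s(v, u)} : Finset (Sym2 V)) : Set (Sym2 V))) = 0 :=
  ncyc_eq_zero (singleEdge_ndeg_le_one hvu)

end SingleEdge

/-! ### Partition helpers -/

lemma support_subset_of_inside {N : Finset (Sym2 V)} {s : Set V}
    (h : ∀ e ∈ N, ∀ x ∈ e, x ∈ s) :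
    (fromEdgeSet (↑N : Set (Sym2 V))).support ⊆ s := by
  rintro x ⟨y, (hxy : (fromEdgeSet (↑N : Set (Sym2 V))).Adj x y)⟩
  rw [fromEdgeSet_adj] at hxy
  exact h _ hxy.1 x (Sym2.mem_mk_left x y)

lemma ndeg_ne_zero_of_adj [Finite V] {G : SimpleGraph V} {x y : V} (h : G.Adj x y) :
    ndeg G x ≠ 0 := by
  rw [ndeg]
  exact Nat.card_ne_zero.mpr ⟨⟨⟨y, h⟩⟩, inferInstance⟩

lemma adj_of_mem_edge {G : SimpleGraph V} {N : Finset (Sym2 V)}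
    (hsub : (↑N : Set (Sym2 V)) ⊆ G.edgeSet) {e : Sym2 V} (he : e ∈ N) {x : V} (hx : x ∈ e) :
    ∃ y, (fromEdgeSet (↑N : Set (Sym2 V))).Adj x y ∧ e = s(x, y) := by
  induction e with
  | h a b =>
    have hne : a ≠ b := (G.mem_edgeSet.mp (hsub he)).ne
    rcases Sym2.mem_iff.mp hx with rfl | rfl
    · exact ⟨b, adj_fromEdgeSet_of_mem hne he, rfl⟩
    · exact ⟨a, adj_fromEdgeSet_of_mem (Ne.symm hne) (Sym2.eq_swap ▸ he), Sym2.eq_swap.symm⟩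

lemma ndeg_zero_iff_inside [Fintype V] {G : SimpleGraph V} {v : V} {N : Finset (Sym2 V)}
    (hsub : (↑N : Set (Sym2 V)) ⊆ G.edgeSet) :
    ndeg (fromEdgeSet (↑N : Set (Sym2 V))) v = 0 ↔
      ∀ e ∈ N, ∀ x ∈ e, x ∈ ({v}ᶜ : Set V) := by
  constructor
  · intro h0 e he x hx
    simp only [Set.mem_compl_iff, Set.mem_singleton_iff]
    rintro rfl
    obtain ⟨y, hy, -⟩ := adj_of_mem_edge hsub he hx
    exact ndeg_ne_zero_of_adj hy h0
  · intro hin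
    by_contra h0
    obtain ⟨w, hw⟩ := exists_adj_of_ndeg_ne_zero h0
    rw [fromEdgeSet_adj] at hw
    have := hin _ hw.1 v (Sym2.mem_mk_left v w)
    simp at this

lemma adj_eq_of_ndeg_one [Fintype V] {G : SimpleGraph V} {x y z : V}
    (h1 : ndeg G x = 1) (hy : G.Adj x y) (hz : G.Adj x z) : y = z := by
  rw [ndeg] at h1
  have hs := (Nat.card_eq_one_iff_unique.mp h1).1
  exact congrArg Subtype.val
    (@Subsingleton.elim _ hs ⟨y, hy⟩ ⟨z, hz⟩)

noncomputable def nbrOf (N : Finset (Sym2 V)) (v : V) : V :=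
  if h : ∃ w, (fromEdgeSet (↑N : Set (Sym2 V))).Adj v w then h.choose else v

lemma nbrOf_adj {N : Finset (Sym2 V)} {v : V}
    (h : ∃ w, (fromEdgeSet (↑N : Set (Sym2 V))).Adj v w) :
    (fromEdgeSet (↑N : Set (Sym2 V))).Adj v (nbrOf N v) := by
  rw [nbrOf, dif_pos h]
  exact h.choose_spec

lemma nbrOf_eq_iff [Fintype V] {N : Finset (Sym2 V)} {v u : V}
    (h1 : ndeg (fromEdgeSet (↑N : Set (Sym2 V))) v = 1) :
    nbrOf N v = u ↔ (fromEdgeSet (↑N : Set (Sym2 V))).Adj v u := by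
  have hex : ∃ w, (fromEdgeSet (↑N : Set (Sym2 V))).Adj v w :=
    exists_adj_of_ndeg_ne_zero (by omega)
  constructor
  · rintro rfl
    exact nbrOf_adj hex
  · intro h
    exact adj_eq_of_ndeg_one h1 (nbrOf_adj hex) h

/-! ### The degree-one fiber -/

section TermB

variable [Fintype V] {G : SimpleGraph V} {v u : V}

lemma deg1_edges_avoid (hGadj : G.Adj v u) {N : Finset (Sym2 V)} (hNs : IsSachs' G N)
    (h1 : ndeg (fromEdgeSet (↑N : Set (Sym2 V))) v = 1)
    (hvu : (fromEdgeSet (↑N : Set (Sym2 V))).Adj v u) :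
    ∀ e ∈ N.erase s(v, u), ∀ x ∈ e, x ∈ ({v, u}ᶜ : Set V) := by
  have hu1 : ndeg (fromEdgeSet (↑N : Set (Sym2 V))) u = 1 := hNs.2.2 v u hvu h1
  intro e he x hx
  have heN : e ∈ N := Finset.mem_of_mem_erase he
  have hene : e ≠ s(v, u) := Finset.ne_of_mem_erase he
  simp only [Set.mem_compl_iff, Set.mem_insert_iff, Set.mem_singleton_iff, not_or]
  constructor
  · rintro rfl
    obtain ⟨y, hy, hey⟩ := adj_of_mem_edge hNs.1 heN hx
    have : y = u := adj_eq_of_ndeg_one h1 hy hvu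
    exact hene (by rw [hey, this])
  · rintro rfl
    obtain ⟨y, hy, hey⟩ := adj_of_mem_edge hNs.1 heN hx
    have : y = v := adj_eq_of_ndeg_one hu1 hy hvu.symm
    exact hene (by rw [hey, this, Sym2.eq_swap])

lemma sum_deg1_fiber (hGadj : G.Adj v u) :
    ∑ N ∈ Finset.univ.filter (fun N : Finset (Sym2 V) => IsSachs G N ∧
        ndeg (fromEdgeSet (↑N : Set (Sym2 V))) v = 1 ∧ nbrOf N v = u),
      2 ^ numCycles N = PS (G.induce ({v, u}ᶜ : Set V)) := by
  have hvune : v ≠ u := hGadj.ne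
  rw [PS_induce_eq_sum]
  refine Finset.sum_nbij' (fun N => N.erase s(v, u)) (fun N' => insert s(v, u) N')
    ?_ ?_ ?_ ?_ ?_
  · -- forward membership
    intro N hN
    simp only [Finset.mem_filter] at hN
    obtain ⟨-, hNs0, h1, hnbr⟩ := hN
    have hNs := (isSachs_iff G N).mp hNs0
    have hvu : (fromEdgeSet (↑N : Set (Sym2 V))).Adj v u := (nbrOf_eq_iff h1).mp hnbr
    have he : s(v, u) ∈ N := by
      rw [fromEdgeSet_adj] at hvu
      exact hvu.1
    have hin := deg1_edges_avoid hGadj hNs h1 hvu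
    have hd : Disjoint (fromEdgeSet (↑({s(v, u)} : Finset (Sym2 V)) : Set (Sym2 V))).support
        (fromEdgeSet (↑(N.erase s(v, u)) : Set (Sym2 V))).support := by
      rw [singleEdge_support hvune]
      rw [Set.disjoint_left]
      intro x hxvu hxe
      exact (support_subset_of_inside hin hxe) hxvu
    have hNd : N = {s(v, u)} ∪ N.erase s(v, u) := by
      rw [← Finset.insert_eq, Finset.insert_erase he]
    simp only [Finset.mem_filter]
    refine ⟨Finset.mem_univ _, ?_, hin⟩
    exact (isSachs_iff _ _).mpr (isSachs'_of_union_right hd (by rw [← hNd]; exact hNs))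
  · -- backward membership
    intro N' hN'
    simp only [Finset.mem_filter] at hN'
    obtain ⟨-, hNs0, hin⟩ := hN'
    have hNs' := (isSachs_iff G N').mp hNs0
    have hvnot : v ∉ (fromEdgeSet (↑N' : Set (Sym2 V))).support := by
      intro hv
      have := support_subset_of_inside hin hv
      simp at this
    have hunot : u ∉ (fromEdgeSet (↑N' : Set (Sym2 V))).support := by
      intro hv
      have := support_subset_of_inside hin hv
      simp at this
    have hd : Disjoint (fromEdgeSet (↑({s(v, u)} : Finset (Sym2 V)) : Set (Sym2 V))).support
        (fromEdgeSet (↑N' : Set (Sym2 V))).support := by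
      rw [singleEdge_support hvune, Set.disjoint_left]
      rintro x (rfl | rfl)
      · exact hvnot
      · intro h
        exact hunot (by simpa using h)
    have hins : insert s(v, u) N' = {s(v, u)} ∪ N' := Finset.insert_eq _ _
    have hSachs : IsSachs' G (insert s(v, u) N') := by
      rw [hins]
      exact isSachs'_union hd (singleEdge_isSachs' hGadj) hNs'
    have hdeg : ndeg (fromEdgeSet (↑(insert s(v, u) N') : Set (Sym2 V))) v = 1 := by
      rw [hins, ndeg_union_left hd hvnot, singleEdge_ndeg_v hvune]
    simp only [Finset.mem_filter]
    refine ⟨Finset.mem_univ _, (isSachs_iff _ _).mpr hSachs, hdeg, ?_⟩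
    rw [nbrOf_eq_iff hdeg, hins, fromEdgeSet_coe_union]
    exact Or.inl ((singleEdge_adj hvune).mpr (Or.inl ⟨rfl, rfl⟩))
  · -- left inverse
    intro N hN
    simp only [Finset.mem_filter] at hN
    obtain ⟨-, hNs0, h1, hnbr⟩ := hN
    have hvu : (fromEdgeSet (↑N : Set (Sym2 V))).Adj v u := (nbrOf_eq_iff h1).mp hnbr
    have he : s(v, u) ∈ N := by
      rw [fromEdgeSet_adj] at hvu
      exact hvu.1
    exact Finset.insert_erase he
  · -- right inverse
    intro N' hN'
    simp only [Finset.mem_filter] at hN'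
    obtain ⟨-, -, hin⟩ := hN'
    have hnotmem : s(v, u) ∉ N' := by
      intro h
      have := hin _ h v (Sym2.mem_mk_left v u)
      simp at this
    exact Finset.erase_insert hnotmem
  · -- values
    intro N hN
    simp only [Finset.mem_filter] at hN
    obtain ⟨-, hNs0, h1, hnbr⟩ := hN
    have hNs := (isSachs_iff G N).mp hNs0
    have hvu : (fromEdgeSet (↑N : Set (Sym2 V))).Adj v u := (nbrOf_eq_iff h1).mp hnbr
    have he : s(v, u) ∈ N := by
      rw [fromEdgeSet_adj] at hvu
      exact hvu.1
    have hin := deg1_edges_avoid hGadj hNs h1 hvu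
    have hd : Disjoint (fromEdgeSet (↑({s(v, u)} : Finset (Sym2 V)) : Set (Sym2 V))).support
        (fromEdgeSet (↑(N.erase s(v, u)) : Set (Sym2 V))).support := by
      rw [singleEdge_support hvune, Set.disjoint_left]
      intro x hxvu hxe
      exact (support_subset_of_inside hin hxe) hxvu
    have hNd : N = {s(v, u)} ∪ N.erase s(v, u) := by
      rw [← Finset.insert_eq, Finset.insert_erase he]
    congr 1
    rw [numCycles_eq_ncyc, numCycles_eq_ncyc]
    conv_lhs => rw [hNd]
    rw [ncyc_congr (fromEdgeSet_coe_union _ _) , ncyc_sup hd, singleEdge_ncyc hvune, zero_add]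

end TermB

/-! ### The cycle component machinery -/

section TermC

variable [Fintype V] {G : SimpleGraph V} {v : V}

def compVerts (N : Finset (Sym2 V)) (v : V) : Set V :=
  {x | (fromEdgeSet (↑N : Set (Sym2 V))).Reachable v x}

lemma mem_compVerts_self (N : Finset (Sym2 V)) (v : V) : v ∈ compVerts N v :=
  Reachable.refl v

lemma compVerts_closed {N : Finset (Sym2 V)} {v a b : V} (ha : a ∈ compVerts N v)
    (hab : (fromEdgeSet (↑N : Set (Sym2 V))).Adj a b) : b ∈ compVerts N v :=
  Reachable.trans ha ⟨Walk.cons hab Walk.nil⟩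

/-- the connected component of `v` in the graph spanned by `N`, as a subgraph of `G`. -/
def compSub (G : SimpleGraph V) (N : Finset (Sym2 V)) (v : V) : G.Subgraph where
  verts := compVerts N v
  Adj a b := (fromEdgeSet (↑N : Set (Sym2 V)) ⊓ G).Adj a b ∧
    a ∈ compVerts N v ∧ b ∈ compVerts N v
  adj_sub h := h.1.2
  edge_vert h := h.2.1
  symm := ⟨fun a b h => ⟨h.1.symm, h.2.2, h.2.1⟩⟩

lemma deg2_propagate {N : Finset (Sym2 V)} (hNs : IsSachs' G N) {a b : V}
    (p : (fromEdgeSet (↑N : Set (Sym2 V))).Walk a b)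
    (ha : ndeg (fromEdgeSet (↑N : Set (Sym2 V))) a = 2) :
    ndeg (fromEdgeSet (↑N : Set (Sym2 V))) b = 2 := by
  induction p with
  | nil => exact ha
  | cons h p ih =>
    rename_i x y z
    apply ih
    have hy : y ∈ (fromEdgeSet (↑N : Set (Sym2 V))).support := ⟨x, h.symm⟩
    rcases hNs.2.1 y hy with hy1 | hy2
    · have := hNs.2.2 y x h.symm hy1
      omega
    · exact hy2

lemma compVerts_ndeg2 {N : Finset (Sym2 V)} (hNs : IsSachs' G N)
    (h2 : ndeg (fromEdgeSet (↑N : Set (Sym2 V))) v = 2) {x : V} (hx : x ∈ compVerts N v) :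
    ndeg (fromEdgeSet (↑N : Set (Sym2 V))) x = 2 := by
  obtain ⟨p⟩ := (hx : (fromEdgeSet (↑N : Set (Sym2 V))).Reachable v x)
  exact deg2_propagate hNs p h2

lemma fromEdgeSet_le {N : Finset (Sym2 V)} (h : (↑N : Set (Sym2 V)) ⊆ G.edgeSet) :
    fromEdgeSet (↑N : Set (Sym2 V)) ≤ G :=
  (fromEdgeSet_mono h).trans_eq (fromEdgeSet_edgeSet G)

lemma compVerts_edge_all {N : Finset (Sym2 V)} (hsub : (↑N : Set (Sym2 V)) ⊆ G.edgeSet)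
    {e : Sym2 V} (he : e ∈ N) {x : V} (hx : x ∈ e) (hxK : x ∈ compVerts N v) :
    ∀ y ∈ e, y ∈ compVerts N v := by
  intro y hy
  obtain ⟨z, hz, hez⟩ := adj_of_mem_edge hsub he hx
  rcases Sym2.mem_iff.mp (hez ▸ hy) with rfl | rfl
  · exact hxK
  · exact compVerts_closed hxK hz

/-- the `A`-part of a Sachs set: edges inside the component of `v`. -/
noncomputable def partA (N : Finset (Sym2 V)) (v : V) : Finset (Sym2 V) :=
  N.filter (fun e => ∀ x ∈ e, x ∈ compVerts N v)

noncomputable def partB (N : Finset (Sym2 V)) (v : V) : Finset (Sym2 V) :=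
  N.filter (fun e => ¬ ∀ x ∈ e, x ∈ compVerts N v)

lemma partA_union_partB (N : Finset (Sym2 V)) (v : V) : partA N v ∪ partB N v = N :=
  Finset.filter_union_filter_not_eq _ N

lemma fromEdgeSet_partA {N : Finset (Sym2 V)} (hsub : (↑N : Set (Sym2 V)) ⊆ G.edgeSet) :
    fromEdgeSet (↑(partA N v) : Set (Sym2 V)) = (compSub G N v).spanningCoe := by
  ext a b
  rw [fromEdgeSet_adj]
  constructor
  · rintro ⟨hab, hne⟩
    rw [Finset.mem_coe, partA, Finset.mem_filter] at hab
    obtain ⟨haN, hall⟩ := hab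
    have hadj : (fromEdgeSet (↑N : Set (Sym2 V))).Adj a b := adj_fromEdgeSet_of_mem hne haN
    exact ⟨⟨hadj, fromEdgeSet_le hsub hadj⟩,
      hall a (Sym2.mem_mk_left a b), hall b (Sym2.mem_mk_right a b)⟩
  · rintro ⟨⟨hadj, -⟩, ha, hb⟩
    rw [fromEdgeSet_adj] at hadj
    refine ⟨?_, hadj.2⟩
    rw [Finset.mem_coe, partA, Finset.mem_filter]
    refine ⟨hadj.1, ?_⟩
    intro x hx
    rcases Sym2.mem_iff.mp hx with rfl | rfl
    · exact ha
    · exact hb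

lemma support_partA {N : Finset (Sym2 V)} (hNs : IsSachs' G N)
    (h2 : ndeg (fromEdgeSet (↑N : Set (Sym2 V))) v = 2) :
    (fromEdgeSet (↑(partA N v) : Set (Sym2 V))).support = compVerts N v := by
  apply Set.Subset.antisymm
  · rintro x ⟨y, (hxy : (fromEdgeSet (↑(partA N v) : Set (Sym2 V))).Adj x y)⟩
    rw [fromEdgeSet_adj] at hxy
    rw [Finset.mem_coe, partA, Finset.mem_filter] at hxy
    exact hxy.1.2 x (Sym2.mem_mk_left x y)
  · intro x hx
    have hdx : ndeg (fromEdgeSet (↑N : Set (Sym2 V))) x = 2 := compVerts_ndeg2 hNs h2 hx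
    obtain ⟨y, hy⟩ := exists_adj_of_ndeg_ne_zero (by omega :
      ndeg (fromEdgeSet (↑N : Set (Sym2 V))) x ≠ 0)
    refine (SimpleGraph.mem_support _).mpr ⟨y, ?_⟩
    rw [fromEdgeSet_adj] at hy ⊢
    refine ⟨?_, hy.2⟩
    rw [Finset.mem_coe, partA, Finset.mem_filter]
    exact ⟨hy.1, compVerts_edge_all hNs.1 hy.1 (Sym2.mem_mk_left x y) hx⟩

lemma partB_inside {N : Finset (Sym2 V)} (hsub : (↑N : Set (Sym2 V)) ⊆ G.edgeSet) :
    ∀ e ∈ partB N v, ∀ x ∈ e, x ∈ ((compVerts N v)ᶜ : Set V) := by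
  intro e he x hx
  rw [partB, Finset.mem_filter] at he
  intro hxK
  exact he.2 (compVerts_edge_all hsub he.1 hx hxK)

lemma disjoint_partA_partB_support {N : Finset (Sym2 V)} (hNs : IsSachs' G N)
    (h2 : ndeg (fromEdgeSet (↑N : Set (Sym2 V))) v = 2) :
    Disjoint (fromEdgeSet (↑(partA N v) : Set (Sym2 V))).support
      (fromEdgeSet (↑(partB N v) : Set (Sym2 V))).support := by
  rw [support_partA hNs h2, Set.disjoint_left]
  intro x hx hxB
  exact support_subset_of_inside (partB_inside hNs.1) hxB hx

/-- the degree of a subgraph, instance-free. -/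
lemma subgraph_degree_eq_ndeg {H : G.Subgraph} (x : V) [Fintype (H.neighborSet x)] :
    H.degree x = ndeg H.spanningCoe x := by
  rw [Subgraph.degree, ndeg]
  have : H.spanningCoe.neighborSet x = H.neighborSet x := rfl
  rw [this, Nat.card_eq_fintype_card]

lemma spanningCoe_edgeSet (H : G.Subgraph) : H.spanningCoe.edgeSet = H.edgeSet := rfl

lemma fromEdgeSet_subgraph_edgeSet (H : G.Subgraph) :
    fromEdgeSet H.edgeSet = H.spanningCoe := by
  conv_rhs => rw [← fromEdgeSet_edgeSet H.spanningCoe]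
  rfl

/-- the coe-to-spanningCoe hom -/
def coeSpanHom (H : G.Subgraph) : H.coe →g H.spanningCoe where
  toFun := Subtype.val
  map_rel' h := h

lemma compSub_isCycle {N : Finset (Sym2 V)} (hNs : IsSachs' G N)
    (h2 : ndeg (fromEdgeSet (↑N : Set (Sym2 V))) v = 2) :
    IsCycleSubgraph (compSub G N v) ∧ v ∈ (compSub G N v).verts := by
  have hvK : v ∈ compVerts N v := mem_compVerts_self N v
  have hlift : ∀ a b (p : (fromEdgeSet (↑N : Set (Sym2 V))).Walk a b) (ha : a ∈ compVerts N v),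
      ∃ hb : b ∈ compVerts N v,
        (compSub G N v).coe.Reachable ⟨a, ha⟩ ⟨b, hb⟩ := by
    intro a b p
    induction p with
    | nil => exact fun ha => ⟨ha, Reachable.refl _⟩
    | cons h p ih =>
      rename_i x y z
      intro hx
      have hy : y ∈ compVerts N v := compVerts_closed hx h
      obtain ⟨hz, hr⟩ := ih hy
      refine ⟨hz, Reachable.trans ⟨Walk.cons ?_ Walk.nil⟩ hr⟩
      exact ⟨⟨h, fromEdgeSet_le hNs.1 h⟩, hx, hy⟩
  refine ⟨⟨?_, ?_⟩, hvK⟩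
  · rw [connected_iff]
    refine ⟨?_, ⟨⟨v, hvK⟩⟩⟩
    rintro ⟨x, hx⟩ ⟨y, hy⟩
    obtain ⟨px⟩ := (hx : (fromEdgeSet (↑N : Set (Sym2 V))).Reachable v x)
    obtain ⟨py⟩ := (hy : (fromEdgeSet (↑N : Set (Sym2 V))).Reachable v y)
    obtain ⟨hx', hrx⟩ := hlift v x px hvK
    obtain ⟨hy', hry⟩ := hlift v y py hvK
    exact Reachable.trans hrx.symm hry
  · intro x hx
    rw [subgraph_degree_eq_ndeg]
    rw [← ndeg_congr (fromEdgeSet_partA hNs.1) x]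
    have hxB : x ∉ (fromEdgeSet (↑(partB N v) : Set (Sym2 V))).support := by
      intro hmem
      exact support_subset_of_inside (partB_inside hNs.1) hmem hx
    have := ndeg_union_left (A := partA N v) (B := partB N v)
      (disjoint_partA_partB_support hNs h2) hxB
    rw [partA_union_partB] at this
    rw [← this]
    exact compVerts_ndeg2 hNs h2 hx

end TermC

section TermC2

variable [Fintype V] {G : SimpleGraph V} {v : V} {H : G.Subgraph}

noncomputable def EF (H : G.Subgraph) [Fintype V] : Finset (Sym2 V) :=
  (Set.toFinite H.edgeSet).toFinset

lemma coe_EF (H : G.Subgraph) : (↑(EF H) : Set (Sym2 V)) = H.edgeSet :=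
  Set.Finite.coe_toFinset _

lemma fromEdgeSet_EF (H : G.Subgraph) :
    fromEdgeSet (↑(EF H) : Set (Sym2 V)) = H.spanningCoe := by
  rw [coe_EF, fromEdgeSet_subgraph_edgeSet]

lemma cycle_ndeg_spanningCoe (hH : IsCycleSubgraph H) {x : V} (hx : x ∈ H.verts) :
    ndeg H.spanningCoe x = 2 := by
  have h := hH.2 x hx
  rwa [subgraph_degree_eq_ndeg] at h

lemma support_spanningCoe_cycle (hH : IsCycleSubgraph H) :
    H.spanningCoe.support = H.verts := by
  apply Set.Subset.antisymm
  · rintro x ⟨y, hxy⟩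
    exact H.edge_vert hxy
  · intro x hx
    apply mem_support_of_ndeg_ne_zero (G := H.spanningCoe)
    rw [cycle_ndeg_spanningCoe hH hx]
    omega

lemma cycle_reachable (hH : IsCycleSubgraph H) (hv : v ∈ H.verts) {x : V}
    (hx : x ∈ H.verts) : H.spanningCoe.Reachable v x := by
  have h := hH.1.preconnected ⟨v, hv⟩ ⟨x, hx⟩
  exact h.map (coeSpanHom H)

lemma cycle_ncyc (hH : IsCycleSubgraph H) (hv : v ∈ H.verts) :
    ncyc H.spanningCoe = 1 :=
  ncyc_eq_one (v₀ := v) (by rw [support_spanningCoe_cycle hH]; exact hv)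
    (fun x hx => cycle_reachable hH hv (by rwa [support_spanningCoe_cycle hH] at hx))
    (fun x hx => cycle_ndeg_spanningCoe hH (by rwa [support_spanningCoe_cycle hH] at hx))

lemma cycle_isSachs' (hH : IsCycleSubgraph H) : IsSachs' G (EF H) := by
  refine ⟨by rw [coe_EF]; exact H.edgeSet_subset, ?_, ?_⟩
  · intro x hx
    right
    rw [ndeg_congr (fromEdgeSet_EF H)]
    apply cycle_ndeg_spanningCoe hH
    have hx' : x ∈ H.spanningCoe.support := by
      rw [← fromEdgeSet_EF H]
      exact hx
    obtain ⟨y, hy⟩ := hx'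
    exact H.edge_vert hy
  · intro x y hxy h1
    exfalso
    have hadj : H.spanningCoe.Adj x y := by
      rw [← fromEdgeSet_EF H]
      exact hxy
    have hx2 : ndeg (fromEdgeSet (↑(EF H) : Set (Sym2 V))) x = 2 := by
      rw [ndeg_congr (fromEdgeSet_EF H)]
      exact cycle_ndeg_spanningCoe hH (H.edge_vert hadj)
    omega

lemma coe_partA_eq {N : Finset (Sym2 V)} (hsub : (↑N : Set (Sym2 V)) ⊆ G.edgeSet) :
    (↑(partA N v) : Set (Sym2 V)) = (compSub G N v).edgeSet := by
  have h1 : (↑(partA N v) : Set (Sym2 V)) \ {e | e.IsDiag} = ↑(partA N v) := by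
    ext e
    simp only [Set.mem_diff, Set.mem_setOf_eq, and_iff_left_iff_imp]
    intro he
    have heN : e ∈ N := by
      have h' := Finset.mem_coe.mp he
      rw [partA, Finset.mem_filter] at h'
      exact h'.1
    induction e with
    | h a b =>
      intro hdiag
      have : a = b := hdiag
      subst this
      exact no_diag_of_subset_edgeSet hsub heN
  rw [← h1, ← Sym2.diagSet_eq_setOfPred_isDiag, ← edgeSet_fromEdgeSet, fromEdgeSet_partA hsub, spanningCoe_edgeSet]

lemma partA_eq_EF {N : Finset (Sym2 V)} (hsub : (↑N : Set (Sym2 V)) ⊆ G.edgeSet)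
    (hcomp : compSub G N v = H) : partA N v = EF H := by
  apply Finset.coe_injective
  rw [coe_partA_eq hsub, coe_EF, hcomp]

lemma partB_eq_sdiff (N : Finset (Sym2 V)) (v : V) : partB N v = N \ partA N v := by
  rw [partA, partB, Finset.filter_not]

lemma sum_deg2_fiber [Fintype ↥((H.verts)ᶜ : Set V)] (hH : IsCycleSubgraph H)
    (hv : v ∈ H.verts) :
    ∑ N ∈ Finset.univ.filter (fun N : Finset (Sym2 V) => IsSachs G N ∧
        ndeg (fromEdgeSet (↑N : Set (Sym2 V))) v = 2 ∧ compSub G N v = H),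
      2 ^ numCycles N = 2 * PS (G.induce ((H.verts)ᶜ : Set V)) := by
  rw [PS_induce_eq_sum, Finset.mul_sum]
  refine Finset.sum_nbij' (fun N => N \ EF H) (fun N' => EF H ∪ N') ?_ ?_ ?_ ?_ ?_
  · -- forward membership
    intro N hN
    simp only [Finset.mem_filter] at hN
    obtain ⟨-, hNs0, h2, hcomp⟩ := hN
    have hNs := (isSachs_iff G N).mp hNs0
    have hA := partA_eq_EF hNs.1 hcomp
    have hBeq : N \ EF H = partB N v := by rw [← hA, ← partB_eq_sdiff]
    have hd := disjoint_partA_partB_support hNs h2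
    simp only [Finset.mem_filter]
    rw [hBeq]
    refine ⟨Finset.mem_univ _, ?_, ?_⟩
    · refine (isSachs_iff _ _).mpr (isSachs'_of_union_right hd ?_)
      rw [partA_union_partB]
      exact hNs
    · intro e he x hx
      rw [← hcomp]
      exact partB_inside hNs.1 e he x hx
  · -- backward membership
    intro N' hN'
    simp only [Finset.mem_filter] at hN'
    obtain ⟨-, hNs0, hin⟩ := hN'
    have hNs' := (isSachs_iff G N').mp hNs0
    have hsupp' : (fromEdgeSet (↑N' : Set (Sym2 V))).support ⊆ ((H.verts)ᶜ : Set V) :=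
      support_subset_of_inside hin
    have hsuppEF : (fromEdgeSet (↑(EF H) : Set (Sym2 V))).support = H.verts := by
      rw [fromEdgeSet_EF, support_spanningCoe_cycle hH]
    have hd : Disjoint (fromEdgeSet (↑(EF H) : Set (Sym2 V))).support
        (fromEdgeSet (↑N' : Set (Sym2 V))).support := by
      rw [hsuppEF, Set.disjoint_left]
      intro x hx hx'
      exact hsupp' hx' hx
    have hvnot : v ∉ (fromEdgeSet (↑N' : Set (Sym2 V))).support := by
      intro h
      exact hsupp' h hv
    have hdeg : ndeg (fromEdgeSet (↑(EF H ∪ N') : Set (Sym2 V))) v = 2 := by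
      rw [ndeg_union_left hd hvnot, ndeg_congr (fromEdgeSet_EF H)]
      exact cycle_ndeg_spanningCoe hH hv
    have hK : compVerts (EF H ∪ N') v = H.verts := by
      apply Set.Subset.antisymm
      · intro x hx
        have hx' : (fromEdgeSet (↑(EF H) : Set (Sym2 V)) ⊔
            fromEdgeSet (↑N' : Set (Sym2 V))).Reachable v x := by
          rw [← fromEdgeSet_coe_union]
          exact hx
        have hvs : v ∈ (fromEdgeSet (↑(EF H) : Set (Sym2 V))).support := by
          rw [hsuppEF]; exact hv
        have := reachable_sup_left hd hvs hx'
        have hxs := mem_support_of_reachable this hvs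
        rwa [hsuppEF] at hxs
      · intro x hx
        have h1 : H.spanningCoe.Reachable v x := cycle_reachable hH hv hx
        have h2 : (fromEdgeSet (↑(EF H) : Set (Sym2 V))).Reachable v x := by
          rw [fromEdgeSet_EF]
          exact h1
        have h3 : (fromEdgeSet (↑(EF H) : Set (Sym2 V)) ⊔
            fromEdgeSet (↑N' : Set (Sym2 V))).Reachable v x :=
          h2.map (Hom.ofLE le_sup_left)
        show (fromEdgeSet (↑(EF H ∪ N') : Set (Sym2 V))).Reachable v x
        rw [fromEdgeSet_coe_union]
        exact h3
    have hcomp : compSub G (EF H ∪ N') v = H := by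
      apply Subgraph.ext
      · exact hK
      · funext a b
        apply propext
        constructor
        · rintro ⟨⟨hGN, hGadj⟩, ha, hb⟩
          have hGN' : (fromEdgeSet (↑(EF H) : Set (Sym2 V)) ⊔
              fromEdgeSet (↑N' : Set (Sym2 V))).Adj a b := by
            rw [← fromEdgeSet_coe_union]
            exact hGN
          rcases hGN' with h | h
          · rw [fromEdgeSet_EF] at h
            exact h
          · exfalso
            have : a ∈ (fromEdgeSet (↑N' : Set (Sym2 V))).support := ⟨b, h⟩
            have ha' : a ∈ H.verts := by rw [← hK]; exact ha
            exact hsupp' this ha'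
        · intro hadj
          have h1 : H.spanningCoe.Adj a b := hadj
          have h2 : (fromEdgeSet (↑(EF H) : Set (Sym2 V))).Adj a b := by
            rw [fromEdgeSet_EF]
            exact h1
          refine ⟨⟨?_, H.adj_sub hadj⟩, ?_, ?_⟩
          · rw [fromEdgeSet_coe_union]
            exact Or.inl h2
          · show a ∈ compVerts (EF H ∪ N') v
            rw [hK]
            exact H.edge_vert hadj
          · show b ∈ compVerts (EF H ∪ N') v
            rw [hK]
            exact H.edge_vert hadj.symm
    simp only [Finset.mem_filter]
    refine ⟨Finset.mem_univ _, ?_, hdeg, hcomp⟩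
    refine (isSachs_iff _ _).mpr (isSachs'_union hd (cycle_isSachs' hH) hNs')
  · -- left inverse
    intro N hN
    simp only [Finset.mem_filter] at hN
    obtain ⟨-, hNs0, h2, hcomp⟩ := hN
    have hNs := (isSachs_iff G N).mp hNs0
    have hA := partA_eq_EF hNs.1 hcomp
    have hsubA : EF H ⊆ N := by
      rw [← hA, partA]
      exact Finset.filter_subset _ N
    exact Finset.union_sdiff_of_subset hsubA
  · -- right inverse
    intro N' hN'
    simp only [Finset.mem_filter] at hN'
    obtain ⟨-, -, hin⟩ := hN'
    apply Finset.union_sdiff_cancel_left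
    rw [Finset.disjoint_left]
    intro e heEF heN'
    have heH : e ∈ H.edgeSet := by rw [← coe_EF]; exact heEF
    induction e with
    | h a b =>
      have hadj : H.Adj a b := heH
      have := hin _ heN' a (Sym2.mem_mk_left a b)
      exact this (H.edge_vert hadj)
  · -- values
    intro N hN
    simp only [Finset.mem_filter] at hN
    obtain ⟨-, hNs0, h2, hcomp⟩ := hN
    have hNs := (isSachs_iff G N).mp hNs0
    have hA := partA_eq_EF hNs.1 hcomp
    have hBeq : N \ EF H = partB N v := by rw [← hA, ← partB_eq_sdiff]
    have hd := disjoint_partA_partB_support hNs h2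
    show (2:ℕ) ^ numCycles N = 2 * 2 ^ numCycles (N \ EF H)
    rw [numCycles_eq_ncyc, numCycles_eq_ncyc, hBeq]
    have hNd : N = partA N v ∪ partB N v := (partA_union_partB N v).symm
    conv_lhs => rw [hNd]
    rw [ncyc_congr (fromEdgeSet_coe_union _ _), ncyc_sup hd]
    have h1 : ncyc (fromEdgeSet (↑(partA N v) : Set (Sym2 V))) = 1 := by
      rw [ncyc_congr (fromEdgeSet_partA hNs.1), hcomp]
      exact cycle_ncyc hH hv
    rw [h1, pow_add, pow_one]

end TermC2

/-! ### Final assembly -/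

instance subgraphFinite [Finite V] {G : SimpleGraph V} : Finite G.Subgraph :=
  Finite.of_injective (fun H => (H.verts, H.Adj))
    (by rintro ⟨v1, a1, h1, h2⟩ ⟨v2, a2, h3, h4⟩ h
        simp only [Prod.mk.injEq] at h
        exact SimpleGraph.Subgraph.ext h.1 h.2)

/-- Vertex deletion formula:
`PS(G) = PS(G-v) + Σ_{u ∈ N(v)} PS(G-v-u) + 2·Σ_{C ∈ 𝒞(v)} PS(G - V(C))`. -/
theorem PS_deleteVertex [Fintype V] (G : SimpleGraph V) (v : V) :
    PS G = PS (G.induce ({v}ᶜ : Set V)) +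
      ∑ u ∈ G.neighborFinset v, PS (G.induce ({v, u}ᶜ : Set V)) +
      2 * ∑ᶠ H ∈ {H : G.Subgraph | IsCycleSubgraph H ∧ v ∈ H.verts},
        PS (G.induce ((H.verts)ᶜ)) := by
  classical
  have hfin : {H : G.Subgraph | IsCycleSubgraph H ∧ v ∈ H.verts}.Finite := Set.toFinite _
  rw [finsum_mem_eq_finite_toFinset_sum _ hfin]
  rw [PS]
  -- split the sum by the degree of v
  rw [← Finset.sum_filter_add_sum_filter_not
    (Finset.univ.filter (fun M : Finset (Sym2 V) => IsSachs G M))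
    (fun N : Finset (Sym2 V) => ndeg (fromEdgeSet (↑N : Set (Sym2 V))) v = 0)]
  rw [← Finset.sum_filter_add_sum_filter_not
    ((Finset.univ.filter (fun M : Finset (Sym2 V) => IsSachs G M)).filter
      (fun N : Finset (Sym2 V) => ¬ ndeg (fromEdgeSet (↑N : Set (Sym2 V))) v = 0))
    (fun N : Finset (Sym2 V) => ndeg (fromEdgeSet (↑N : Set (Sym2 V))) v = 1)]
  rw [add_assoc]
  congr 1
  · -- degree 0 part
    rw [PS_induce_eq_sum]
    apply Finset.sum_congr _ (fun _ _ => rfl)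
    ext N
    simp only [Finset.mem_filter, Finset.mem_univ, true_and]
    constructor
    · rintro ⟨hNs, h0⟩
      exact ⟨hNs, (ndeg_zero_iff_inside ((isSachs_iff G N).mp hNs).1).mp h0⟩
    · rintro ⟨hNs, hin⟩
      exact ⟨hNs, (ndeg_zero_iff_inside ((isSachs_iff G N).mp hNs).1).mpr hin⟩
  congr 1
  · -- degree 1 part
    have hmaps : ∀ N : Finset (Sym2 V), N ∈ ((Finset.univ.filter (fun M : Finset (Sym2 V) => IsSachs G M)).filter
        (fun N : Finset (Sym2 V) => ¬ ndeg (fromEdgeSet (↑N : Set (Sym2 V))) v = 0)).filter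
        (fun N : Finset (Sym2 V) => ndeg (fromEdgeSet (↑N : Set (Sym2 V))) v = 1) →
        nbrOf N v ∈ G.neighborFinset v := by
      intro N hN
      simp only [Finset.mem_filter, Finset.mem_univ, true_and] at hN
      obtain ⟨⟨hNs, -⟩, h1⟩ := hN
      have hadj : (fromEdgeSet (↑N : Set (Sym2 V))).Adj v (nbrOf N v) :=
        (nbrOf_eq_iff h1).mp rfl
      rw [mem_neighborFinset]
      exact fromEdgeSet_le ((isSachs_iff G N).mp hNs).1 hadj
    rw [← Finset.sum_fiberwise_of_maps_to hmaps]
    apply Finset.sum_congr rfl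
    intro u hu
    rw [mem_neighborFinset] at hu
    rw [← sum_deg1_fiber hu]
    apply Finset.sum_congr _ (fun _ _ => rfl)
    ext N
    simp only [Finset.mem_filter, Finset.mem_univ, true_and]
    constructor
    · rintro ⟨⟨⟨hNs, -⟩, h1⟩, hnbr⟩
      exact ⟨hNs, h1, hnbr⟩
    · rintro ⟨hNs, h1, hnbr⟩
      exact ⟨⟨⟨hNs, by omega⟩, h1⟩, hnbr⟩
  · -- degree 2 part
    have hS2 : ((Finset.univ.filter (fun M : Finset (Sym2 V) => IsSachs G M)).filter
        (fun N : Finset (Sym2 V) => ¬ ndeg (fromEdgeSet (↑N : Set (Sym2 V))) v = 0)).filter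
        (fun N : Finset (Sym2 V) => ¬ ndeg (fromEdgeSet (↑N : Set (Sym2 V))) v = 1) =
        Finset.univ.filter (fun N : Finset (Sym2 V) => IsSachs G N ∧
          ndeg (fromEdgeSet (↑N : Set (Sym2 V))) v = 2) := by
      ext N
      simp only [Finset.mem_filter, Finset.mem_univ, true_and]
      constructor
      · rintro ⟨⟨hNs, h0⟩, h1⟩
        have hsupp : v ∈ (fromEdgeSet (↑N : Set (Sym2 V))).support :=
          mem_support_of_ndeg_ne_zero h0
        have := ((isSachs_iff G N).mp hNs).2.1 v hsupp
        refine ⟨hNs, by omega⟩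
      · rintro ⟨hNs, h2⟩
        exact ⟨⟨hNs, by omega⟩, by omega⟩
    rw [hS2]
    have hmaps : ∀ N : Finset (Sym2 V), N ∈ Finset.univ.filter (fun N : Finset (Sym2 V) => IsSachs G N ∧
        ndeg (fromEdgeSet (↑N : Set (Sym2 V))) v = 2) →
        compSub G N v ∈ hfin.toFinset := by
      intro N hN
      simp only [Finset.mem_filter, Finset.mem_univ, true_and] at hN
      obtain ⟨hNs, h2⟩ := hN
      rw [Set.Finite.mem_toFinset, Set.mem_setOf_eq]
      exact compSub_isCycle ((isSachs_iff G N).mp hNs) h2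
    rw [← Finset.sum_fiberwise_of_maps_to hmaps, Finset.mul_sum]
    apply Finset.sum_congr rfl
    intro H hH
    rw [Set.Finite.mem_toFinset, Set.mem_setOf_eq] at hH
    rw [← sum_deg2_fiber hH.1 hH.2]
    apply Finset.sum_congr _ (fun _ _ => rfl)
    ext N
    simp only [Finset.mem_filter, Finset.mem_univ, true_and]
    tauto

end PermSum
end
end

section
/- Let D(3, n−3) be the graph obtained by attaching one end vertex of a path P_{n−3} to a vertex of a triangle C_3. Then for n ≥ 5, PS(D(3, n−3)) = 6·F(n−2) + 2·F(n−3). -/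
open SimpleGraph Finset
open scoped Classical

noncomputable section

namespace PermSum

variable {V W : Type*}

/-- `D(3, m)`: a triangle with a pendant path on `m` further vertices (total `m + 3`),
obtained from the path `0-1-⋯-(m+2)` by adding the edge `{0, 2}`. -/
def D3 (m : ℕ) : SimpleGraph (Fin (m + 3)) :=
  pathGraph (m + 3) ⊔ fromEdgeSet {s((0 : Fin (m + 3)), (2 : Fin (m + 3)))}

variable {m : ℕ}

variable {m : ℕ}

theorem sachs21 {m : ℕ} {M : Finset (Sym2 (Fin (m + 3)))} (hS : IsSachs (D3 m) M) :
    ∀ v ∈ (fromEdgeSet (↑M : Set (Sym2 (Fin (m + 3))))).support,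
      (fromEdgeSet (↑M : Set (Sym2 (Fin (m + 3))))).degree v = 1 ∨
      (fromEdgeSet (↑M : Set (Sym2 (Fin (m + 3))))).degree v = 2 := by
  have := hS.2.1
  convert this using 6
theorem sachs22 {m : ℕ} {M : Finset (Sym2 (Fin (m + 3)))} (hS : IsSachs (D3 m) M) :
    ∀ v w, (fromEdgeSet (↑M : Set (Sym2 (Fin (m + 3))))).Adj v w →
      (fromEdgeSet (↑M : Set (Sym2 (Fin (m + 3))))).degree v = 1 →
      (fromEdgeSet (↑M : Set (Sym2 (Fin (m + 3))))).degree w = 1 := by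
  have := hS.2.2
  convert this using 6
theorem mkSachs {m : ℕ} {M : Finset (Sym2 (Fin (m + 3)))} (h0 : (↑M : Set (Sym2 (Fin (m + 3)))) ⊆ (D3 m).edgeSet)
   (h1 : ∀ v ∈ (fromEdgeSet (↑M : Set (Sym2 (Fin (m + 3))))).support,
      (fromEdgeSet (↑M : Set (Sym2 (Fin (m + 3))))).degree v = 1 ∨
      (fromEdgeSet (↑M : Set (Sym2 (Fin (m + 3))))).degree v = 2)
   (h2 : ∀ v w, (fromEdgeSet (↑M : Set (Sym2 (Fin (m + 3))))).Adj v w →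
      (fromEdgeSet (↑M : Set (Sym2 (Fin (m + 3))))).degree v = 1 →
      (fromEdgeSet (↑M : Set (Sym2 (Fin (m + 3))))).degree w = 1) : IsSachs (D3 m) M := by
  refine ⟨h0, ?_, ?_⟩
  · convert h1 using 6
  · convert h2 using 6
theorem numCyc {m : ℕ} (M : Finset (Sym2 (Fin (m + 3)))) : numCycles M =
  Nat.card {c : (fromEdgeSet (↑M : Set (Sym2 (Fin (m + 3))))).ConnectedComponent //
    ∀ v, (fromEdgeSet (↑M : Set (Sym2 (Fin (m + 3))))).connectedComponentMk v = c →
      (fromEdgeSet (↑M : Set (Sym2 (Fin (m + 3))))).degree v = 2} := by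
  unfold numCycles
  exact Nat.card_congr (Equiv.subtypeEquivRight fun c =>
    ⟨fun h => by convert h using 4, fun h => by convert h using 4⟩)

def vt (m i : ℕ) : Fin (m + 3) := ⟨i % (m + 3), Nat.mod_lt _ (by omega)⟩

theorem vt_val {i : ℕ} (h : i ≤ m + 2) : (vt m i).val = i := Nat.mod_eq_of_lt (by omega)

def pe (m i : ℕ) : Sym2 (Fin (m + 3)) := s(vt m i, vt m (i + 1))

def ch (m : ℕ) : Sym2 (Fin (m + 3)) := s(vt m 0, vt m 2)

theorem fin_zero : (0 : Fin (m + 3)) = vt m 0 := by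
  ext; simp [vt]

theorem fin_two : (2 : Fin (m + 3)) = vt m 2 := by
  ext
  rw [vt_val (by omega)]
  simp [Fin.val_two]

theorem mem_edgeSet_D3 {e : Sym2 (Fin (m + 3))} :
    e ∈ (D3 m).edgeSet ↔ (∃ i ≤ m + 1, e = pe m i) ∨ e = ch m := by
  induction e using Sym2.ind with
  | _ u v =>
    rw [mem_edgeSet]
    simp only [D3, sup_adj, pathGraph_adj, fromEdgeSet_adj, Set.mem_singleton_iff]
    constructor
    · rintro ((h | h) | ⟨h, hne⟩)
      · refine Or.inl ⟨u.val, by omega, ?_⟩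
        rw [pe, Sym2.eq_iff]
        exact Or.inl ⟨Fin.ext (by rw [vt_val (by omega)]),
          Fin.ext (by rw [vt_val (by omega)]; omega)⟩
      · refine Or.inl ⟨v.val, by omega, ?_⟩
        rw [pe, Sym2.eq_iff]
        exact Or.inr ⟨Fin.ext (by rw [vt_val (by omega)]; omega),
          Fin.ext (by rw [vt_val (by omega)])⟩
      · right; rw [h, ch, fin_zero, fin_two]
    · rintro (⟨i, hi, he⟩ | he)
      · rw [pe] at he
        rcases Sym2.eq_iff.mp he with ⟨h1, h2⟩ | ⟨h1, h2⟩
        · left; left; rw [h1, h2, vt_val (by omega), vt_val (by omega)]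
        · left; right; rw [h1, h2, vt_val (by omega), vt_val (by omega)]
      · rw [ch] at he
        refine Or.inr ⟨by rw [he, fin_zero, fin_two], ?_⟩
        rcases Sym2.eq_iff.mp he with ⟨h1, h2⟩ | ⟨h1, h2⟩ <;>
          (rw [h1, h2]; intro h; have := congrArg Fin.val h;
           rw [vt_val (by omega), vt_val (by omega)] at this; omega)

theorem mem_pe {v : Fin (m + 3)} {i : ℕ} (hi : i ≤ m + 1) :
    v ∈ pe m i ↔ v.val = i ∨ v.val = i + 1 := by
  rw [pe, Sym2.mem_iff]
  constructor
  · rintro (rfl | rfl)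
    · left; rw [vt_val (by omega)]
    · right; rw [vt_val (by omega)]
  · rintro (h | h)
    · left; exact Fin.ext (by rw [vt_val (by omega)]; exact h)
    · right; exact Fin.ext (by rw [vt_val (by omega)]; exact h)

theorem mem_ch {v : Fin (m + 3)} : v ∈ ch m ↔ v.val = 0 ∨ v.val = 2 := by
  rw [ch, Sym2.mem_iff]
  constructor
  · rintro (rfl | rfl)
    · left; rw [vt_val (by omega)]
    · right; rw [vt_val (by omega)]
  · rintro (h | h)
    · left; exact Fin.ext (by rw [vt_val (by omega)]; exact h)
    · right; exact Fin.ext (by rw [vt_val (by omega)]; exact h)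

theorem pe_ne_diag {i : ℕ} (hi : i ≤ m + 1) : ¬ (pe m i).IsDiag := by
  rw [pe, Sym2.isDiag_iff_proj_eq]
  intro h
  have := congrArg Fin.val h
  rw [vt_val (by omega), vt_val (by omega)] at this
  omega

theorem ch_ne_diag : ¬ (ch m).IsDiag := by
  rw [ch, Sym2.isDiag_iff_proj_eq]
  intro h
  have := congrArg Fin.val h
  rw [vt_val (by omega), vt_val (by omega)] at this
  omega

theorem pe_inj {i j : ℕ} (hi : i ≤ m + 1) (hj : j ≤ m + 1) (h : pe m i = pe m j) : i = j := by
  rw [pe, pe, Sym2.eq_iff] at h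
  rcases h with ⟨h1, h2⟩ | ⟨h1, h2⟩ <;>
    [skip; skip] <;>
    (first
      | (have e1 := congrArg Fin.val h1; have e2 := congrArg Fin.val h2
         rw [vt_val (by omega), vt_val (by omega)] at e1
         rw [vt_val (by omega), vt_val (by omega)] at e2
         omega))

theorem pe_ne_ch {i : ℕ} (hi : i ≤ m + 1) : pe m i ≠ ch m := by
  intro h
  have h1 : (vt m i : Fin (m+3)) ∈ pe m i := by rw [pe]; exact Sym2.mem_mk_left _ _
  have h2 : (vt m (i+1) : Fin (m+3)) ∈ pe m i := by rw [pe]; exact Sym2.mem_mk_right _ _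
  rw [h, mem_ch] at h1 h2
  rw [vt_val (by omega)] at h1
  rw [vt_val (by omega)] at h2
  omega

/-- degree in `fromEdgeSet ↑M` as a filter count, assuming `M` has no diagonal members. -/
theorem degree_eq_card_filter (M : Finset (Sym2 (Fin (m + 3))))
    (hM : ∀ e ∈ M, ¬ e.IsDiag) (v : Fin (m + 3)) :
    (fromEdgeSet (↑M : Set (Sym2 (Fin (m + 3))))).degree v
      = (M.filter (fun e => v ∈ e)).card := by
  classical
  rw [← card_incidenceFinset_eq_degree]
  congr 1
  ext e
  rw [mem_incidenceFinset, incidenceSet, Set.mem_sep_iff, edgeSet_fromEdgeSet,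
    Set.mem_diff, Finset.mem_filter]
  constructor
  · rintro ⟨⟨he, -⟩, hv⟩; exact ⟨he, hv⟩
  · rintro ⟨he, hv⟩; exact ⟨⟨he, hM e he⟩, hv⟩

theorem adj_iff {M : Finset (Sym2 (Fin (m + 3)))}
    (hM : ∀ e ∈ M, ¬ e.IsDiag) {v w : Fin (m + 3)} :
    (fromEdgeSet (↑M : Set (Sym2 (Fin (m + 3))))).Adj v w ↔ s(v, w) ∈ M := by
  rw [fromEdgeSet_adj]
  constructor
  · exact fun h => h.1
  · intro h
    refine ⟨h, fun hvw => hM _ h ?_⟩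
    rw [hvw]
    exact Sym2.isDiag_iff_proj_eq |>.mpr rfl


section
variable {M : Finset (Sym2 (Fin (m + 3)))}

theorem hdiag_of_subset (hE : ∀ e ∈ M, e ∈ (D3 m).edgeSet) : ∀ e ∈ M, ¬ e.IsDiag := by
  intro e he
  rcases mem_edgeSet_D3.mp (hE e he) with ⟨i, hi, rfl⟩ | rfl
  · exact pe_ne_diag hi
  · exact ch_ne_diag

theorem sachs_edges (hS : IsSachs (D3 m) M) : ∀ e ∈ M, e ∈ (D3 m).edgeSet :=
  fun e he => hS.1 he

theorem deg_pos_support {v : Fin (m + 3)} (hdiag : ∀ e ∈ M, ¬ e.IsDiag)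
    (h : 0 < (fromEdgeSet (↑M : Set (Sym2 (Fin (m + 3))))).degree v) :
    v ∈ (fromEdgeSet (↑M : Set (Sym2 (Fin (m + 3))))).support := by
  obtain ⟨w, hw⟩ := (fromEdgeSet (↑M : Set (Sym2 (Fin (m + 3))))).degree_pos_iff_exists_adj v |>.mp h
  exact ⟨w, hw⟩

theorem sachs_deg_le_two (hS : IsSachs (D3 m) M) (v : Fin (m + 3)) :
    (fromEdgeSet (↑M : Set (Sym2 (Fin (m + 3))))).degree v ≤ 2 := by
  rcases Nat.eq_zero_or_pos ((fromEdgeSet (↑M : Set (Sym2 (Fin (m + 3))))).degree v) with h | h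
  · omega
  · rcases sachs21 hS v (deg_pos_support (hdiag_of_subset (sachs_edges hS)) h) with h | h <;> omega

/-- If a vertex `v` with `v.val ≥ 3` has degree 2, then `v.val ≤ m+1` and both incident
path edges are in `M`. -/
theorem deg_two_ge3 (hS : IsSachs (D3 m) M) {v : Fin (m + 3)} (hv : 3 ≤ v.val)
    (h2 : (fromEdgeSet (↑M : Set (Sym2 (Fin (m + 3))))).degree v = 2) :
    v.val ≤ m + 1 ∧ pe m (v.val - 1) ∈ M ∧ pe m v.val ∈ M := by
  have hE := sachs_edges hS
  have hdiag := hdiag_of_subset hE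
  rw [degree_eq_card_filter M hdiag v] at h2
  obtain ⟨e1, he1, e2, he2, hne⟩ := Finset.one_lt_card.mp (by omega : 1 < (M.filter (fun e => v ∈ e)).card)
  rw [Finset.mem_filter] at he1 he2
  -- each edge containing v (v ≥ 3) is pe i with i = v.val - 1 or i = v.val, i ≤ m + 1
  have key : ∀ e, e ∈ M → v ∈ e → ∃ i ≤ m + 1, e = pe m i ∧ (i = v.val - 1 ∨ i = v.val) := by
    intro e heM hve
    rcases mem_edgeSet_D3.mp (hE e heM) with ⟨i, hi, rfl⟩ | rfl
    · have := (mem_pe hi).mp hve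
      exact ⟨i, hi, rfl, by omega⟩
    · have := mem_ch.mp hve; omega
  obtain ⟨i1, hi1, rfl, hc1⟩ := key e1 he1.1 he1.2
  obtain ⟨i2, hi2, rfl, hc2⟩ := key e2 he2.1 he2.2
  have hne' : i1 ≠ i2 := fun h => hne (by rw [h])
  have hv1 : v.val - 1 ≤ m + 1 ∧ v.val ≤ m + 1 := by
    constructor <;> omega
  rcases hc1 with rfl | rfl <;> rcases hc2 with rfl | rfl <;> first
    | omega
    | (exact ⟨by omega, he1.1, he2.1⟩)
    | (exact ⟨by omega, he2.1, he1.1⟩)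

theorem deg_le_one_ge3 (hS : IsSachs (D3 m) M) :
    ∀ (v : Fin (m + 3)), 3 ≤ v.val →
      (fromEdgeSet (↑M : Set (Sym2 (Fin (m + 3))))).degree v ≤ 1 := by
  suffices h : ∀ k (v : Fin (m + 3)), m + 2 - v.val ≤ k → 3 ≤ v.val →
      (fromEdgeSet (↑M : Set (Sym2 (Fin (m + 3))))).degree v ≤ 1 by
    intro v hv; exact h (m + 2) v (by omega) hv
  intro k
  induction k with
  | zero =>
    intro v hk hv
    by_contra hgt
    have h2 : (fromEdgeSet (↑M : Set (Sym2 (Fin (m + 3))))).degree v = 2 := by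
      have := sachs_deg_le_two hS v; omega
    have := (deg_two_ge3 hS hv h2).1
    have hvlt := v.isLt
    omega
  | succ k ih =>
    intro v hk hv
    by_contra hgt
    have h2 : (fromEdgeSet (↑M : Set (Sym2 (Fin (m + 3))))).degree v = 2 := by
      have := sachs_deg_le_two hS v; omega
    obtain ⟨hle, -, hpv⟩ := deg_two_ge3 hS hv h2
    -- the next vertex w = v + 1 is adjacent to v
    set w : Fin (m + 3) := vt m (v.val + 1) with hw
    have hwval : w.val = v.val + 1 := vt_val (by omega)
    have hradj : (fromEdgeSet (↑M : Set (Sym2 (Fin (m + 3))))).Adj w v := by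
      rw [adj_iff (hdiag_of_subset (sachs_edges hS))]
      have : s(w, v) = pe m v.val := by
        rw [pe, Sym2.eq_iff]
        exact Or.inr ⟨rfl, Fin.ext (by rw [vt_val (by omega)])⟩
      rw [this]; exact hpv
    have hdw : 0 < (fromEdgeSet (↑M : Set (Sym2 (Fin (m + 3))))).degree w :=
      ((fromEdgeSet (↑M : Set (Sym2 (Fin (m + 3))))).degree_pos_iff_exists_adj w).mpr ⟨v, hradj⟩
    rcases sachs21 hS w (deg_pos_support (hdiag_of_subset (sachs_edges hS)) hdw) with h1 | h1
    · have := sachs22 hS w v hradj h1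
      omega
    · have := ih w (by rw [hwval]; omega) (by rw [hwval]; omega)
      omega

end

section
variable {M : Finset (Sym2 (Fin (m + 3)))}

theorem edge_at0 (hE : ∀ e ∈ M, e ∈ (D3 m).edgeSet) {e : Sym2 (Fin (m + 3))}
    (heM : e ∈ M) (hve : vt m 0 ∈ e) : e = pe m 0 ∨ e = ch m := by
  rcases mem_edgeSet_D3.mp (hE e heM) with ⟨i, hi, rfl⟩ | rfl
  · have := (mem_pe hi).mp hve
    rw [vt_val (by omega)] at this
    left; congr 1; omega
  · right; rfl

theorem edge_at1 (hE : ∀ e ∈ M, e ∈ (D3 m).edgeSet) {e : Sym2 (Fin (m + 3))}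
    (heM : e ∈ M) (hve : vt m 1 ∈ e) : e = pe m 0 ∨ e = pe m 1 := by
  rcases mem_edgeSet_D3.mp (hE e heM) with ⟨i, hi, rfl⟩ | rfl
  · have := (mem_pe hi).mp hve
    rw [vt_val (by omega)] at this
    rcases this with h | h
    · right; congr 1; omega
    · left; congr 1; omega
  · have := mem_ch.mp hve
    rw [vt_val (by omega)] at this
    omega

theorem edge_at2 (hE : ∀ e ∈ M, e ∈ (D3 m).edgeSet) {e : Sym2 (Fin (m + 3))}
    (heM : e ∈ M) (hve : vt m 2 ∈ e) : e = pe m 1 ∨ e = pe m 2 ∨ e = ch m := by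
  rcases mem_edgeSet_D3.mp (hE e heM) with ⟨i, hi, rfl⟩ | rfl
  · have := (mem_pe hi).mp hve
    rw [vt_val (by omega)] at this
    rcases this with h | h
    · right; left; congr 1; omega
    · left; congr 1; omega
  · right; right; rfl

theorem vt_mem_pe {i j : ℕ} (hi : i ≤ m + 1) (hj : j ≤ m + 2) :
    vt m j ∈ pe m i ↔ j = i ∨ j = i + 1 := by
  rw [mem_pe hi, vt_val hj]

theorem vt_mem_ch {j : ℕ} (hj : j ≤ m + 2) : vt m j ∈ ch m ↔ j = 0 ∨ j = 2 := by
  rw [mem_ch, vt_val hj]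

/-- Degrees at the triangle when the triangle is present and `pe 2` absent. -/
theorem deg_triangle (hm : 2 ≤ m) (hE : ∀ e ∈ M, e ∈ (D3 m).edgeSet)
    (h0 : pe m 0 ∈ M) (h1 : pe m 1 ∈ M) (hc : ch m ∈ M) (h2 : pe m 2 ∉ M) :
    ∀ j ≤ 2, (fromEdgeSet (↑M : Set (Sym2 (Fin (m + 3))))).degree (vt m j) = 2 := by
  have hdiag := hdiag_of_subset hE
  intro j hj
  rw [degree_eq_card_filter M hdiag]
  interval_cases j
  · have : M.filter (fun e => vt m 0 ∈ e) = {pe m 0, ch m} := by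
      apply Finset.Subset.antisymm
      · intro e he
        rw [Finset.mem_filter] at he
        rcases edge_at0 hE he.1 he.2 with rfl | rfl <;> simp
      · intro e he
        rcases Finset.mem_insert.mp he with rfl | he
        · exact Finset.mem_filter.mpr ⟨h0, (vt_mem_pe (by omega) (by omega)).mpr (by omega)⟩
        · rw [Finset.mem_singleton] at he
          subst he
          exact Finset.mem_filter.mpr ⟨hc, (vt_mem_ch (by omega)).mpr (by omega)⟩
    rw [this, Finset.card_insert_of_notMem (by simpa using pe_ne_ch (by omega)),
      Finset.card_singleton]
  · have : M.filter (fun e => vt m 1 ∈ e) = {pe m 0, pe m 1} := by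
      apply Finset.Subset.antisymm
      · intro e he
        rw [Finset.mem_filter] at he
        rcases edge_at1 hE he.1 he.2 with rfl | rfl <;> simp
      · intro e he
        rcases Finset.mem_insert.mp he with rfl | he
        · exact Finset.mem_filter.mpr ⟨h0, (vt_mem_pe (by omega) (by omega)).mpr (by omega)⟩
        · rw [Finset.mem_singleton] at he
          subst he
          exact Finset.mem_filter.mpr ⟨h1, (vt_mem_pe (by omega) (by omega)).mpr (by omega)⟩
    rw [this, Finset.card_insert_of_notMem
      (by simpa using fun h => absurd (pe_inj (by omega) (by omega) h) (by omega)),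
      Finset.card_singleton]
  · have : M.filter (fun e => vt m 2 ∈ e) = {pe m 1, ch m} := by
      apply Finset.Subset.antisymm
      · intro e he
        rw [Finset.mem_filter] at he
        rcases edge_at2 hE he.1 he.2 with rfl | rfl | rfl
        · simp
        · exact absurd he.1 h2
        · simp
      · intro e he
        rcases Finset.mem_insert.mp he with rfl | he
        · exact Finset.mem_filter.mpr ⟨h1, (vt_mem_pe (by omega) (by omega)).mpr (by omega)⟩
        · rw [Finset.mem_singleton] at he
          subst he
          exact Finset.mem_filter.mpr ⟨hc, (vt_mem_ch (by omega)).mpr (by omega)⟩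
    rw [this, Finset.card_insert_of_notMem (by simpa using pe_ne_ch (by omega)),
      Finset.card_singleton]

end

section
variable {M : Finset (Sym2 (Fin (m + 3)))}

theorem pe2_deg2 (hm : 2 ≤ m) (hS : IsSachs (D3 m) M) (h : pe m 2 ∈ M) :
    (fromEdgeSet (↑M : Set (Sym2 (Fin (m + 3))))).degree (vt m 2) = 1 := by
  have hdiag := hdiag_of_subset (sachs_edges hS)
  have hadj : (fromEdgeSet (↑M : Set (Sym2 (Fin (m + 3))))).Adj (vt m 3) (vt m 2) := by
    rw [adj_iff hdiag]
    have : s(vt m 3, vt m 2) = pe m 2 := by rw [pe, Sym2.eq_swap]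
    rw [this]; exact h
  have hd3 : 0 < (fromEdgeSet (↑M : Set (Sym2 (Fin (m + 3))))).degree (vt m 3) :=
    (degree_pos_iff_exists_adj _ _).mpr ⟨vt m 2, hadj⟩
  have hd3' : (fromEdgeSet (↑M : Set (Sym2 (Fin (m + 3))))).degree (vt m 3) ≤ 1 :=
    deg_le_one_ge3 hS (vt m 3) (by rw [vt_val (by omega)])
  exact sachs22 hS _ _ hadj (by omega)

theorem deg_bump (hS : IsSachs (D3 m) M) {u w : Fin (m + 3)} (h : s(u, w) ∈ M)
    (hu : (fromEdgeSet (↑M : Set (Sym2 (Fin (m + 3))))).degree u = 2) :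
    (fromEdgeSet (↑M : Set (Sym2 (Fin (m + 3))))).degree w = 2 := by
  have hdiag := hdiag_of_subset (sachs_edges hS)
  have hadj : (fromEdgeSet (↑M : Set (Sym2 (Fin (m + 3))))).Adj w u := by
    rw [adj_iff hdiag, Sym2.eq_swap]; exact h
  have hdw : 0 < (fromEdgeSet (↑M : Set (Sym2 (Fin (m + 3))))).degree w :=
    (degree_pos_iff_exists_adj _ _).mpr ⟨u, hadj⟩
  have hle := sachs_deg_le_two hS w
  have : (fromEdgeSet (↑M : Set (Sym2 (Fin (m + 3))))).degree w ≠ 1 := by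
    intro h1
    have := sachs22 hS w u hadj h1
    omega
  omega

theorem two_edges_at {v : Fin (m + 3)} (hdiag : ∀ e ∈ M, ¬ e.IsDiag)
    (h2 : (fromEdgeSet (↑M : Set (Sym2 (Fin (m + 3))))).degree v = 2) :
    ∃ e1 ∈ M, ∃ e2 ∈ M, e1 ≠ e2 ∧ v ∈ e1 ∧ v ∈ e2 := by
  rw [degree_eq_card_filter M hdiag] at h2
  obtain ⟨e1, he1, e2, he2, hne⟩ := Finset.one_lt_card.mp (by omega :
    1 < (M.filter (fun e => v ∈ e)).card)
  rw [Finset.mem_filter] at he1 he2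
  exact ⟨e1, he1.1, e2, he2.1, hne, he1.2, he2.2⟩

theorem triangle_of_deg2 (hm : 2 ≤ m) (hS : IsSachs (D3 m) M) {v : Fin (m + 3)}
    (hv : v.val ≤ 2)
    (h2 : (fromEdgeSet (↑M : Set (Sym2 (Fin (m + 3))))).degree v = 2) :
    pe m 0 ∈ M ∧ pe m 1 ∈ M ∧ ch m ∈ M ∧ pe m 2 ∉ M := by
  have hE := sachs_edges hS
  have hdiag := hdiag_of_subset hE
  have hC2 : (fromEdgeSet (↑M : Set (Sym2 (Fin (m + 3))))).degree (vt m 2) = 2 →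
      pe m 1 ∈ M ∧ ch m ∈ M ∧ pe m 2 ∉ M := by
    intro hd2
    have hpe2 : pe m 2 ∉ M := fun h => by have := pe2_deg2 hm hS h; omega
    obtain ⟨e1, he1, e2, he2, hne, hv1, hv2⟩ := two_edges_at hdiag hd2
    rcases edge_at2 hE he1 hv1 with rfl | rfl | rfl <;>
      rcases edge_at2 hE he2 hv2 with rfl | rfl | rfl <;>
      first
        | exact absurd rfl hne
        | exact absurd he1 hpe2
        | exact absurd he2 hpe2
        | exact ⟨he1, he2, hpe2⟩
        | exact ⟨he2, he1, hpe2⟩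
  have hC0 : (fromEdgeSet (↑M : Set (Sym2 (Fin (m + 3))))).degree (vt m 0) = 2 →
      pe m 0 ∈ M ∧ ch m ∈ M := by
    intro hd0
    obtain ⟨e1, he1, e2, he2, hne, hv1, hv2⟩ := two_edges_at hdiag hd0
    rcases edge_at0 hE he1 hv1 with rfl | rfl <;>
      rcases edge_at0 hE he2 hv2 with rfl | rfl <;>
      first
        | exact absurd rfl hne
        | exact ⟨he1, he2⟩
        | exact ⟨he2, he1⟩
  have hC1 : (fromEdgeSet (↑M : Set (Sym2 (Fin (m + 3))))).degree (vt m 1) = 2 →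
      pe m 0 ∈ M ∧ pe m 1 ∈ M := by
    intro hd1
    obtain ⟨e1, he1, e2, he2, hne, hv1, hv2⟩ := two_edges_at hdiag hd1
    rcases edge_at1 hE he1 hv1 with rfl | rfl <;>
      rcases edge_at1 hE he2 hv2 with rfl | rfl <;>
      first
        | exact absurd rfl hne
        | exact ⟨he1, he2⟩
        | exact ⟨he2, he1⟩
  -- degree 2 at vertex 0 implies the full triangle
  have main0 : (fromEdgeSet (↑M : Set (Sym2 (Fin (m + 3))))).degree (vt m 0) = 2 →
      pe m 0 ∈ M ∧ pe m 1 ∈ M ∧ ch m ∈ M ∧ pe m 2 ∉ M := by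
    intro hd0
    obtain ⟨hp0, hch⟩ := hC0 hd0
    have hd2 : (fromEdgeSet (↑M : Set (Sym2 (Fin (m + 3))))).degree (vt m 2) = 2 :=
      deg_bump hS (show s(vt m 0, vt m 2) ∈ M from hch) hd0
    obtain ⟨hp1, -, hpe2⟩ := hC2 hd2
    exact ⟨hp0, hp1, hch, hpe2⟩
  have hvv : v = vt m v.val := Fin.ext (by rw [vt_val (by omega)])
  have hval : v.val = 0 ∨ v.val = 1 ∨ v.val = 2 := by omega
  rcases hval with h | h | h
  · have hveq : vt m 0 = v := by rw [← h]; exact hvv.symm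
    exact main0 (by rwa [hveq])
  · have hveq : vt m 1 = v := by rw [← h]; exact hvv.symm
    have hd1 : (fromEdgeSet (↑M : Set (Sym2 (Fin (m + 3))))).degree (vt m 1) = 2 := by
      rwa [hveq]
    obtain ⟨hp0, hp1⟩ := hC1 hd1
    have hd0 : (fromEdgeSet (↑M : Set (Sym2 (Fin (m + 3))))).degree (vt m 0) = 2 :=
      deg_bump hS (show s(vt m 1, vt m 0) ∈ M by rwa [Sym2.eq_swap]) hd1
    exact main0 hd0
  · have hveq : vt m 2 = v := by rw [← h]; exact hvv.symm
    have hd2 : (fromEdgeSet (↑M : Set (Sym2 (Fin (m + 3))))).degree (vt m 2) = 2 := by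
      rwa [hveq]
    obtain ⟨hp1, hch, hpe2⟩ := hC2 hd2
    have hd0 : (fromEdgeSet (↑M : Set (Sym2 (Fin (m + 3))))).degree (vt m 0) = 2 :=
      deg_bump hS (show s(vt m 2, vt m 0) ∈ M by rwa [Sym2.eq_swap]) hd2
    exact main0 hd0

theorem dichotomy (hm : 2 ≤ m) (hS : IsSachs (D3 m) M) :
    (∀ v, (fromEdgeSet (↑M : Set (Sym2 (Fin (m + 3))))).degree v ≤ 1) ∨
    (pe m 0 ∈ M ∧ pe m 1 ∈ M ∧ ch m ∈ M ∧ pe m 2 ∉ M) := by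
  by_cases h : ∀ v, (fromEdgeSet (↑M : Set (Sym2 (Fin (m + 3))))).degree v ≤ 1
  · exact Or.inl h
  · push_neg at h
    obtain ⟨v, hv⟩ := h
    have h2 : (fromEdgeSet (↑M : Set (Sym2 (Fin (m + 3))))).degree v = 2 := by
      have := sachs_deg_le_two hS v; omega
    have : v.val ≤ 2 := by
      by_contra h3
      have := deg_le_one_ge3 hS v (by omega)
      omega
    exact Or.inr (triangle_of_deg2 hm hS this h2)

end

def noc (S : Finset ℕ) : Prop := ∀ i ∈ S, i + 1 ∉ S

def nocSets (l : ℕ) : Finset (Finset ℕ) := (Finset.range l).powerset.filter noc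

theorem mem_nocSets {l : ℕ} {S : Finset ℕ} :
    S ∈ nocSets l ↔ (∀ i ∈ S, i < l) ∧ noc S := by
  simp [nocSets, Finset.subset_iff]

theorem card_nocSets (l : ℕ) : (nocSets l).card = Nat.fib (l + 2) := by
  induction l using Nat.strong_induction_on with
  | _ l ih =>
  match l with
  | 0 =>
    have : nocSets 0 = {∅} := by
      ext S
      simp only [mem_nocSets, Finset.mem_singleton]
      constructor
      · rintro ⟨h, -⟩
        exact Finset.eq_empty_of_forall_notMem fun x hx => by simpa using h x hx
      · rintro rfl; simp [noc]
    simp [this]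
  | 1 =>
    have : nocSets 1 = {∅, {0}} := by
      ext S
      simp only [mem_nocSets, Finset.mem_insert, Finset.mem_singleton]
      constructor
      · rintro ⟨h, -⟩
        by_cases h0 : 0 ∈ S
        · right
          apply Finset.Subset.antisymm
          · intro x hx; simpa using Nat.lt_one_iff.mp (h x hx)
          · simpa using h0
        · left
          exact Finset.eq_empty_of_forall_notMem fun x hx =>
            h0 (by simpa using Nat.lt_one_iff.mp (h x hx) ▸ hx)
      · rintro (rfl | rfl) <;> simp [noc]
    rw [this]; rw [Finset.card_insert_of_notMem (fun h => by simpa using congrArg (0 ∈ ·) (Finset.mem_singleton.mp h))]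
    simp [Nat.fib]
  | (l + 2) =>
    have key : nocSets (l + 2) = nocSets (l + 1) ∪ (nocSets l).image (insert (l + 1)) := by
      ext S
      simp only [Finset.mem_union, Finset.mem_image]
      constructor
      · intro hS
        rw [mem_nocSets] at hS
        obtain ⟨hlt, hnoc⟩ := hS
        by_cases hl : l + 1 ∈ S
        · right
          refine ⟨S.erase (l + 1), ?_, by simp [Finset.insert_erase hl]⟩
          rw [mem_nocSets]
          refine ⟨fun i hi => ?_, fun i hi => ?_⟩
          · rw [Finset.mem_erase] at hi
            have := hlt i hi.2
            rcases Nat.lt_or_ge i l with h | h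
            · exact h
            · exfalso
              have hil : i = l := by
                have : i ≠ l + 1 := fun h => hi.1 (by omega)
                omega
              exact hnoc l (hil ▸ hi.2) hl
          · rw [Finset.mem_erase] at hi ⊢
            exact fun h => hnoc i hi.2 h.2
        · left
          rw [mem_nocSets]
          refine ⟨fun i hi => ?_, hnoc⟩
          have := hlt i hi
          rcases Nat.lt_or_ge i (l + 1) with h | h
          · exact h
          · exfalso
            have : i = l + 1 := by omega
            exact hl (this ▸ hi)
      · rintro (hS | ⟨T, hT, rfl⟩)
        · rw [mem_nocSets] at hS ⊢
          exact ⟨fun i hi => Nat.lt_succ_of_lt (hS.1 i hi), hS.2⟩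
        · rw [mem_nocSets] at hT ⊢
          constructor
          · intro i hi
            rcases Finset.mem_insert.mp hi with rfl | hi
            · omega
            · have := hT.1 i hi; omega
          · intro i hi hi1
            rcases Finset.mem_insert.mp hi with rfl | hi
            · rcases Finset.mem_insert.mp hi1 with h | h
              · omega
              · have := hT.1 _ h; omega
            · rcases Finset.mem_insert.mp hi1 with h | h
              · have := hT.1 _ hi; omega
              · exact hT.2 i hi h
    have hdisj : Disjoint (nocSets (l + 1)) ((nocSets l).image (insert (l + 1))) := by
      rw [Finset.disjoint_left]
      intro S hS hS2
      obtain ⟨T, hT, rfl⟩ := Finset.mem_image.mp hS2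
      rw [mem_nocSets] at hS
      have := hS.1 (l + 1) (Finset.mem_insert_self _ _)
      omega
    have hinj : Set.InjOn (insert (l + 1)) ((nocSets l : Finset (Finset ℕ)) : Set (Finset ℕ)) := by
      intro S hS T hT h
      rw [Finset.mem_coe, mem_nocSets] at hS hT
      have hS' : l + 1 ∉ S := fun h => by have := hS.1 _ h; omega
      have hT' : l + 1 ∉ T := fun h => by have := hT.1 _ h; omega
      rw [← Finset.erase_insert hS', ← Finset.erase_insert hT', h]
    rw [key, Finset.card_union_of_disjoint hdisj, Finset.card_image_of_injOn hinj,
      ih (l + 1) (by omega), ih l (by omega)]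
    have h := Nat.fib_add_two (n := l + 2)
    have h2 : Nat.fib (l + 2 + 1) = Nat.fib (l + 1 + 2) := rfl
    omega

def Bset (m : ℕ) : Finset (Finset ℕ) := (nocSets (m + 2)).filter (fun S => ∀ i ∈ S, 3 ≤ i)

theorem mem_Bset {S : Finset ℕ} :
    S ∈ Bset m ↔ (∀ i ∈ S, 3 ≤ i ∧ i < m + 2) ∧ noc S := by
  rw [Bset, Finset.mem_filter, mem_nocSets]
  constructor
  · rintro ⟨⟨h1, h2⟩, h3⟩; exact ⟨fun i hi => ⟨h3 i hi, h1 i hi⟩, h2⟩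
  · rintro ⟨h1, h2⟩; exact ⟨⟨fun i hi => (h1 i hi).2, h2⟩, fun i hi => (h1 i hi).1⟩

section
variable {M : Finset (Sym2 (Fin (m + 3)))} {S : Finset ℕ}

theorem image_pe_subset_edgeSet (hS : ∀ i ∈ S, i < m + 2) :
    ∀ e ∈ S.image (pe m), e ∈ (D3 m).edgeSet := by
  intro e he
  obtain ⟨i, hi, rfl⟩ := Finset.mem_image.mp he
  exact mem_edgeSet_D3.mpr (Or.inl ⟨i, by have := hS i hi; omega, rfl⟩)

/-- pairs of edges of `S.image pe` sharing a vertex are equal, given `noc S`. -/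
theorem pe_pair_eq (hlt : ∀ i ∈ S, i < m + 2) (hnoc : noc S) {i j : ℕ}
    (hi : i ∈ S) (hj : j ∈ S) {v : Fin (m + 3)} (hvi : v ∈ pe m i) (hvj : v ∈ pe m j) :
    i = j := by
  have h1 := (mem_pe (by have := hlt i hi; omega)).mp hvi
  have h2 := (mem_pe (by have := hlt j hj; omega)).mp hvj
  by_contra hne
  have : j = i + 1 ∨ i = j + 1 := by omega
  rcases this with h | h
  · exact hnoc i hi (h ▸ hj)
  · exact hnoc j hj (h ▸ hi)

theorem deg_le_one_image (hlt : ∀ i ∈ S, i < m + 2) (hnoc : noc S) (v : Fin (m + 3)) :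
    (fromEdgeSet (↑(S.image (pe m)) : Set (Sym2 (Fin (m + 3))))).degree v ≤ 1 := by
  have hE := image_pe_subset_edgeSet hlt
  rw [degree_eq_card_filter _ (hdiag_of_subset hE)]
  rw [Finset.card_le_one]
  intro e1 he1 e2 he2
  rw [Finset.mem_filter] at he1 he2
  obtain ⟨i, hi, rfl⟩ := Finset.mem_image.mp he1.1
  obtain ⟨j, hj, rfl⟩ := Finset.mem_image.mp he2.1
  rw [pe_pair_eq hlt hnoc hi hj he1.2 he2.2]

theorem deg_le_one_insert_ch (hB : S ∈ Bset m) (v : Fin (m + 3)) :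
    (fromEdgeSet (↑(insert (ch m) (S.image (pe m))) : Set (Sym2 (Fin (m + 3))))).degree v
      ≤ 1 := by
  rw [mem_Bset] at hB
  have hnoc : noc S := hB.2
  have hlt : ∀ i ∈ S, i < m + 2 := fun i hi => (hB.1 i hi).2
  have hge : ∀ i ∈ S, 3 ≤ i := fun i hi => (hB.1 i hi).1
  have hE : ∀ e ∈ insert (ch m) (S.image (pe m)), e ∈ (D3 m).edgeSet := by
    intro e he
    rcases Finset.mem_insert.mp he with rfl | he
    · exact mem_edgeSet_D3.mpr (Or.inr rfl)
    · exact image_pe_subset_edgeSet hlt e he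
  rw [degree_eq_card_filter _ (hdiag_of_subset hE)]
  rw [Finset.card_le_one]
  intro e1 he1 e2 he2
  rw [Finset.mem_filter] at he1 he2
  have key : ∀ i ∈ S, ¬ (v ∈ pe m i ∧ v ∈ ch m) := by
    intro i hi ⟨h1, h2⟩
    have := (mem_pe (by have := hlt i hi; omega)).mp h1
    have := mem_ch.mp h2
    have := hge i hi
    omega
  rcases Finset.mem_insert.mp he1.1 with rfl | h1 <;>
    rcases Finset.mem_insert.mp he2.1 with rfl | h2
  · rfl
  · obtain ⟨j, hj, rfl⟩ := Finset.mem_image.mp h2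
    exact absurd ⟨he2.2, he1.2⟩ (key j hj)
  · obtain ⟨i, hi, rfl⟩ := Finset.mem_image.mp h1
    exact absurd ⟨he1.2, he2.2⟩ (key i hi)
  · obtain ⟨i, hi, rfl⟩ := Finset.mem_image.mp h1
    obtain ⟨j, hj, rfl⟩ := Finset.mem_image.mp h2
    rw [pe_pair_eq hlt hnoc hi hj he1.2 he2.2]

theorem matching_isSachs (hE : ∀ e ∈ M, e ∈ (D3 m).edgeSet)
    (hdeg : ∀ v, (fromEdgeSet (↑M : Set (Sym2 (Fin (m + 3))))).degree v ≤ 1) :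
    IsSachs (D3 m) M := by
  refine mkSachs (fun e he => hE e he) ?_ ?_
  · intro v hv
    obtain ⟨w, hw⟩ := hv
    have : 0 < (fromEdgeSet (↑M : Set (Sym2 (Fin (m + 3))))).degree v :=
      (degree_pos_iff_exists_adj _ _).mpr ⟨w, hw⟩
    have := hdeg v
    omega
  · intro v w hadj _
    have : 0 < (fromEdgeSet (↑M : Set (Sym2 (Fin (m + 3))))).degree w :=
      (degree_pos_iff_exists_adj _ _).mpr ⟨v, hadj.symm⟩
    have := hdeg w
    omega

end

def tri (m : ℕ) (S : Finset ℕ) : Finset (Sym2 (Fin (m + 3))) :=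
  insert (pe m 0) (insert (pe m 1) (insert (ch m) (S.image (pe m))))

section
variable {S : Finset ℕ}

theorem tri_edges (hB : S ∈ Bset m) : ∀ e ∈ tri m S, e ∈ (D3 m).edgeSet := by
  rw [mem_Bset] at hB
  intro e he
  rcases Finset.mem_insert.mp he with rfl | he
  · exact mem_edgeSet_D3.mpr (Or.inl ⟨0, by omega, rfl⟩)
  rcases Finset.mem_insert.mp he with rfl | he
  · exact mem_edgeSet_D3.mpr (Or.inl ⟨1, by omega, rfl⟩)
  rcases Finset.mem_insert.mp he with rfl | he
  · exact mem_edgeSet_D3.mpr (Or.inr rfl)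
  · exact image_pe_subset_edgeSet (fun i hi => (hB.1 i hi).2) e he

theorem pe2_not_mem_tri (hm : 2 ≤ m) (hB : S ∈ Bset m) : pe m 2 ∉ tri m S := by
  rw [mem_Bset] at hB
  intro h
  rcases Finset.mem_insert.mp h with h | h
  · have := pe_inj (by omega) (by omega) h; omega
  rcases Finset.mem_insert.mp h with h | h
  · have := pe_inj (by omega) (by omega) h; omega
  rcases Finset.mem_insert.mp h with h | h
  · exact pe_ne_ch (by omega) h
  · obtain ⟨i, hi, hpe⟩ := Finset.mem_image.mp h
    have := pe_inj (by have := (hB.1 i hi).2; omega) (by omega) hpe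
    have := (hB.1 i hi).1
    omega

theorem deg_tri_small (hm : 2 ≤ m) (hB : S ∈ Bset m) :
    ∀ j ≤ 2, (fromEdgeSet (↑(tri m S) : Set (Sym2 (Fin (m + 3))))).degree (vt m j) = 2 := by
  apply deg_triangle hm (tri_edges hB)
  · exact Finset.mem_insert_self _ _
  · exact Finset.mem_insert_of_mem (Finset.mem_insert_self _ _)
  · exact Finset.mem_insert_of_mem (Finset.mem_insert_of_mem (Finset.mem_insert_self _ _))
  · exact pe2_not_mem_tri hm hB

theorem not_mem_small_edges (hm : 2 ≤ m) {v : Fin (m + 3)} (hv : 3 ≤ v.val) :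
    v ∉ pe m 0 ∧ v ∉ pe m 1 ∧ v ∉ ch m := by
  refine ⟨?_, ?_, ?_⟩
  · intro h; have := (mem_pe (by omega)).mp h; omega
  · intro h; have := (mem_pe (by omega)).mp h; omega
  · intro h; have := mem_ch.mp h; omega

theorem deg_tri_ge3 (hm : 2 ≤ m) (hB : S ∈ Bset m) {v : Fin (m + 3)} (hv : 3 ≤ v.val) :
    (fromEdgeSet (↑(tri m S) : Set (Sym2 (Fin (m + 3))))).degree v ≤ 1 := by
  have hBB := mem_Bset.mp hB
  rw [degree_eq_card_filter _ (hdiag_of_subset (tri_edges hB))]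
  rw [Finset.card_le_one]
  have key : ∀ e ∈ tri m S, v ∈ e → ∃ i ∈ S, e = pe m i := by
    intro e he hve
    obtain ⟨hn0, hn1, hnc⟩ := not_mem_small_edges (m := m) hm hv
    rcases Finset.mem_insert.mp he with rfl | he
    · exact absurd hve hn0
    rcases Finset.mem_insert.mp he with rfl | he
    · exact absurd hve hn1
    rcases Finset.mem_insert.mp he with rfl | he
    · exact absurd hve hnc
    · obtain ⟨i, hi, rfl⟩ := Finset.mem_image.mp he
      exact ⟨i, hi, rfl⟩
  intro e1 he1 e2 he2
  rw [Finset.mem_filter] at he1 he2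
  obtain ⟨i, hi, rfl⟩ := key e1 he1.1 he1.2
  obtain ⟨j, hj, rfl⟩ := key e2 he2.1 he2.2
  rw [pe_pair_eq (fun i hi => (hBB.1 i hi).2) hBB.2 hi hj he1.2 he2.2]

theorem tri_isSachs (hm : 2 ≤ m) (hB : S ∈ Bset m) : IsSachs (D3 m) (tri m S) := by
  have hE := tri_edges hB
  refine mkSachs (fun e he => hE e he) ?_ ?_
  · intro v hv
    rcases Nat.lt_or_ge v.val 3 with h3 | h3
    · right
      have hveq : v = vt m v.val := Fin.ext (by rw [vt_val (by omega)])
      rw [hveq]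
      exact deg_tri_small hm hB v.val (by omega)
    · left
      obtain ⟨w, hw⟩ := hv
      have h1 : 0 < (fromEdgeSet (↑(tri m S) : Set (Sym2 (Fin (m + 3))))).degree v :=
        (degree_pos_iff_exists_adj _ _).mpr ⟨w, hw⟩
      have := deg_tri_ge3 hm hB h3
      omega
  · intro v w hadj hdv
    have hv3 : 3 ≤ v.val := by
      by_contra h3
      have hveq : v = vt m v.val := Fin.ext (by rw [vt_val (by omega)])
      rw [hveq, deg_tri_small hm hB v.val (by omega)] at hdv
      omega
    -- the edge s(v, w) is a path edge with index in S, so w ≥ 3 as well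
    have hsm : s(v, w) ∈ tri m S := ((adj_iff (hdiag_of_subset hE)).mp hadj)
    have hw3 : 3 ≤ w.val := by
      have hBB := mem_Bset.mp hB
      obtain ⟨hn0, hn1, hnc⟩ := not_mem_small_edges (m := m) hm hv3
      have hvmem : v ∈ s(v, w) := Sym2.mem_mk_left _ _
      have hwmem : w ∈ s(v, w) := Sym2.mem_mk_right _ _
      rcases Finset.mem_insert.mp hsm with h | h
      · exact absurd (h ▸ hvmem) hn0
      rcases Finset.mem_insert.mp h with h | h
      · exact absurd (h ▸ hvmem) hn1
      rcases Finset.mem_insert.mp h with h | h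
      · exact absurd (h ▸ hvmem) hnc
      · obtain ⟨i, hi, hpe⟩ := Finset.mem_image.mp h
        have := (mem_pe (by have := (hBB.1 i hi).2; omega)).mp (hpe ▸ hwmem)
        have := (hBB.1 i hi).1
        omega
    have h1 : 0 < (fromEdgeSet (↑(tri m S) : Set (Sym2 (Fin (m + 3))))).degree w :=
      (degree_pos_iff_exists_adj _ _).mpr ⟨v, hadj.symm⟩
    have := deg_tri_ge3 hm hB hw3
    omega

end


theorem numCycles_eq_zero {M : Finset (Sym2 (Fin (m + 3)))}
    (hdeg : ∀ v, (fromEdgeSet (↑M : Set (Sym2 (Fin (m + 3))))).degree v ≤ 1) :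
    numCycles M = 0 := by
  rw [numCyc]
  have : IsEmpty {c : (fromEdgeSet (↑M : Set (Sym2 (Fin (m + 3))))).ConnectedComponent //
      ∀ v, (fromEdgeSet (↑M : Set (Sym2 (Fin (m + 3))))).connectedComponentMk v = c →
        (fromEdgeSet (↑M : Set (Sym2 (Fin (m + 3))))).degree v = 2} := by
    constructor
    rintro ⟨c, hc⟩
    obtain ⟨v, rfl⟩ := c.exists_rep
    have := hc v rfl
    have := hdeg v
    omega
  exact Nat.card_of_isEmpty

theorem numCycles_tri {S : Finset ℕ} (hm : 2 ≤ m) (hB : S ∈ Bset m) :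
    numCycles (tri m S) = 1 := by
  have hE := tri_edges hB
  have hdiag := hdiag_of_subset hE
  have hBB := mem_Bset.mp hB
  set H := fromEdgeSet (↑(tri m S) : Set (Sym2 (Fin (m + 3)))) with hH
  -- adjacency preserves being in the triangle
  have stepA : ∀ u w : Fin (m + 3), H.Adj u w → u.val < 3 → w.val < 3 := by
    intro u w hadj hu
    have hsm : s(u, w) ∈ tri m S := (adj_iff hdiag).mp hadj
    have hwmem : w ∈ s(u, w) := Sym2.mem_mk_right _ _
    have humem : u ∈ s(u, w) := Sym2.mem_mk_left _ _
    rcases Finset.mem_insert.mp hsm with h | h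
    · have := (mem_pe (m := m) (i := 0) (by omega)).mp (h ▸ hwmem); omega
    rcases Finset.mem_insert.mp h with h | h
    · have := (mem_pe (m := m) (i := 1) (by omega)).mp (h ▸ hwmem); omega
    rcases Finset.mem_insert.mp h with h | h
    · have := (mem_ch (m := m)).mp (h ▸ hwmem); omega
    · obtain ⟨i, hi, hpe⟩ := Finset.mem_image.mp h
      have := (mem_pe (by have := (hBB.1 i hi).2; omega)).mp (hpe ▸ humem)
      have := (hBB.1 i hi).1
      omega
  have walk_lt3 : ∀ (u w : Fin (m + 3)) (p : H.Walk u w), u.val < 3 → w.val < 3 := by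
    intro u w p
    induction p with
    | nil => exact id
    | cons h q ih => exact fun hu => ih (stepA _ _ h hu)
  have hdeg3 : ∀ v : Fin (m + 3), v.val < 3 → H.degree v = 2 := by
    intro v hv
    have hveq : v = vt m v.val := Fin.ext (by rw [vt_val (by omega)])
    rw [hveq]
    exact deg_tri_small hm hB v.val (by omega)
  have hadj01 : H.Adj (vt m 0) (vt m 1) := by
    rw [adj_iff hdiag]
    exact Finset.mem_insert_self _ _
  have hadj02 : H.Adj (vt m 0) (vt m 2) := by
    rw [adj_iff hdiag]
    exact Finset.mem_insert_of_mem (Finset.mem_insert_of_mem (Finset.mem_insert_self _ _))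
  have c0prop : ∀ v, H.connectedComponentMk v = H.connectedComponentMk (vt m 0) →
      H.degree v = 2 := by
    intro v hv
    have hreach : H.Reachable (vt m 0) v := (SimpleGraph.ConnectedComponent.eq.mp hv).symm
    obtain ⟨p⟩ := hreach
    exact hdeg3 v (walk_lt3 _ _ p (by rw [vt_val (by omega)]; omega))
  have huniq : ∀ c : H.ConnectedComponent,
      (∀ v, H.connectedComponentMk v = c → H.degree v = 2) →
      c = H.connectedComponentMk (vt m 0) := by
    intro c hc
    obtain ⟨v, rfl⟩ := c.exists_rep
    have hv2 := hc v rfl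
    have hv3 : v.val < 3 := by
      by_contra h3
      have hle := deg_tri_ge3 hm hB (v := v) (by omega)
      replace hle : H.degree v ≤ 1 := by convert hle using 2
      omega
    have hveq : v = vt m v.val := Fin.ext (by rw [vt_val (by omega)])
    apply SimpleGraph.ConnectedComponent.eq.mpr
    rcases (by omega : v.val = 0 ∨ v.val = 1 ∨ v.val = 2) with h | h | h
    · rw [hveq, h]
    · rw [hveq, h]; exact hadj01.symm.reachable
    · rw [hveq, h]; exact hadj02.symm.reachable
  rw [numCyc, Nat.card_eq_one_iff_unique]
  constructor
  · constructor
    rintro ⟨c1, hc1⟩ ⟨c2, hc2⟩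
    apply Subtype.ext
    show c1 = c2
    rw [huniq c1 hc1, huniq c2 hc2]
  · exact ⟨⟨H.connectedComponentMk (vt m 0), c0prop⟩⟩

def fam1 (m : ℕ) : Finset (Finset (Sym2 (Fin (m + 3)))) :=
  (nocSets (m + 2)).image (fun S => S.image (pe m))

def fam2 (m : ℕ) : Finset (Finset (Sym2 (Fin (m + 3)))) :=
  (Bset m).image (fun S => insert (ch m) (S.image (pe m)))

def fam3 (m : ℕ) : Finset (Finset (Sym2 (Fin (m + 3)))) :=
  (Bset m).image (tri m)

section
variable {M : Finset (Sym2 (Fin (m + 3)))}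

theorem deg_two_of (hdiag : ∀ e ∈ M, ¬ e.IsDiag) {e1 e2 : Sym2 (Fin (m + 3))}
    (h1 : e1 ∈ M) (h2 : e2 ∈ M) (hne : e1 ≠ e2) {v : Fin (m + 3)}
    (hv1 : v ∈ e1) (hv2 : v ∈ e2) :
    2 ≤ (fromEdgeSet (↑M : Set (Sym2 (Fin (m + 3))))).degree v := by
  rw [degree_eq_card_filter M hdiag]
  exact Finset.one_lt_card.mpr ⟨e1, Finset.mem_filter.mpr ⟨h1, hv1⟩,
    e2, Finset.mem_filter.mpr ⟨h2, hv2⟩, hne⟩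

theorem sachs_mem_fams (hm : 2 ≤ m) (hS : IsSachs (D3 m) M) :
    M ∈ fam1 m ∪ fam2 m ∪ fam3 m := by
  have hE := sachs_edges hS
  have hdiag := hdiag_of_subset hE
  set I : Finset ℕ := (Finset.range (m + 2)).filter (fun i => pe m i ∈ M) with hI
  have hImem : ∀ i, i ∈ I ↔ i < m + 2 ∧ pe m i ∈ M := by
    intro i; rw [hI, Finset.mem_filter, Finset.mem_range]
  have hMcases : ∀ e ∈ M, (∃ i ∈ I, e = pe m i) ∨ e = ch m := by
    intro e he
    rcases mem_edgeSet_D3.mp (hE e he) with ⟨i, hi, rfl⟩ | rfl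
    · exact Or.inl ⟨i, (hImem i).mpr ⟨by omega, he⟩, rfl⟩
    · exact Or.inr rfl
  rcases dichotomy hm hS with hmatch | ⟨hp0, hp1, hch, hp2⟩
  · -- matching case
    have hnocI : noc I := by
      intro i hi hi1
      obtain ⟨hilt, hpi⟩ := (hImem i).mp hi
      obtain ⟨hi1lt, hpi1⟩ := (hImem (i + 1)).mp hi1
      have hne : pe m i ≠ pe m (i + 1) := fun h => by
        have := pe_inj (by omega) (by omega) h; omega
      have := deg_two_of hdiag hpi hpi1 hne
        ((vt_mem_pe (by omega) (by omega)).mpr (by omega) : vt m (i + 1) ∈ pe m i)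
        ((vt_mem_pe (by omega) (by omega)).mpr (by omega))
      have := hmatch (vt m (i + 1))
      omega
    by_cases hch : ch m ∈ M
    · -- M = insert ch (I.image pe), I ∈ Bset
      have hge3 : ∀ i ∈ I, 3 ≤ i := by
        intro i hi
        by_contra h3
        obtain ⟨hilt, hpi⟩ := (hImem i).mp hi
        have hne : pe m i ≠ ch m := pe_ne_ch (by omega)
        have hcommon : ∃ v : Fin (m + 3), v ∈ pe m i ∧ v ∈ ch m := by
          rcases (by omega : i = 0 ∨ i = 1 ∨ i = 2) with rfl | rfl | rfl
          · exact ⟨vt m 0, (vt_mem_pe (by omega) (by omega)).mpr (by omega),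
              (vt_mem_ch (by omega)).mpr (by omega)⟩
          · exact ⟨vt m 2, (vt_mem_pe (by omega) (by omega)).mpr (by omega),
              (vt_mem_ch (by omega)).mpr (by omega)⟩
          · exact ⟨vt m 2, (vt_mem_pe (by omega) (by omega)).mpr (by omega),
              (vt_mem_ch (by omega)).mpr (by omega)⟩
        obtain ⟨v, hv1, hv2⟩ := hcommon
        have := deg_two_of hdiag hpi hch hne hv1 hv2
        have := hmatch v
        omega
      have hIB : I ∈ Bset m := mem_Bset.mpr
        ⟨fun i hi => ⟨hge3 i hi, ((hImem i).mp hi).1⟩, hnocI⟩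
      have hMeq : M = insert (ch m) (I.image (pe m)) := by
        ext e
        constructor
        · intro he
          rcases hMcases e he with ⟨i, hi, rfl⟩ | rfl
          · exact Finset.mem_insert_of_mem (Finset.mem_image_of_mem _ hi)
          · exact Finset.mem_insert_self _ _
        · intro he
          rcases Finset.mem_insert.mp he with rfl | he
          · exact hch
          · obtain ⟨i, hi, rfl⟩ := Finset.mem_image.mp he
            exact ((hImem i).mp hi).2
      exact Finset.mem_union_left _ (Finset.mem_union_right _
        (Finset.mem_image.mpr ⟨I, hIB, hMeq.symm⟩))
    · -- M = I.image pe, I ∈ nocSets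
      have hIN : I ∈ nocSets (m + 2) := mem_nocSets.mpr
        ⟨fun i hi => ((hImem i).mp hi).1, hnocI⟩
      have hMeq : M = I.image (pe m) := by
        ext e
        constructor
        · intro he
          rcases hMcases e he with ⟨i, hi, rfl⟩ | rfl
          · exact Finset.mem_image_of_mem _ hi
          · exact absurd he hch
        · intro he
          obtain ⟨i, hi, rfl⟩ := Finset.mem_image.mp he
          exact ((hImem i).mp hi).2
      exact Finset.mem_union_left _ (Finset.mem_union_left _
        (Finset.mem_image.mpr ⟨I, hIN, hMeq.symm⟩))
  · -- triangle case
    set S : Finset ℕ := I.filter (fun i => 3 ≤ i) with hSdef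
    have hSmem : ∀ i, i ∈ S ↔ (3 ≤ i ∧ i < m + 2 ∧ pe m i ∈ M) := by
      intro i
      rw [hSdef, Finset.mem_filter, hImem]
      tauto
    have hnocS : noc S := by
      intro i hi hi1
      obtain ⟨hi3, hilt, hpi⟩ := (hSmem i).mp hi
      obtain ⟨-, hi1lt, hpi1⟩ := (hSmem (i + 1)).mp hi1
      have hne : pe m i ≠ pe m (i + 1) := fun h => by
        have := pe_inj (by omega) (by omega) h; omega
      have := deg_two_of hdiag hpi hpi1 hne
        ((vt_mem_pe (by omega) (by omega)).mpr (by omega) : vt m (i + 1) ∈ pe m i)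
        ((vt_mem_pe (by omega) (by omega)).mpr (by omega))
      have := deg_le_one_ge3 hS (vt m (i + 1)) (by rw [vt_val (by omega)]; omega)
      omega
    have hSB : S ∈ Bset m := mem_Bset.mpr
      ⟨fun i hi => ⟨((hSmem i).mp hi).1, ((hSmem i).mp hi).2.1⟩, hnocS⟩
    have hMeq : M = tri m S := by
      ext e
      rw [tri]
      constructor
      · intro he
        rcases hMcases e he with ⟨i, hi, rfl⟩ | rfl
        · obtain ⟨hilt, hpi⟩ := (hImem i).mp hi
          rcases (by omega : i = 0 ∨ i = 1 ∨ i = 2 ∨ 3 ≤ i) with rfl | rfl | rfl | h3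
          · exact Finset.mem_insert_self _ _
          · exact Finset.mem_insert_of_mem (Finset.mem_insert_self _ _)
          · exact absurd hpi hp2
          · exact Finset.mem_insert_of_mem (Finset.mem_insert_of_mem
              (Finset.mem_insert_of_mem (Finset.mem_image_of_mem _
                ((hSmem i).mpr ⟨h3, hilt, hpi⟩))))
        · exact Finset.mem_insert_of_mem (Finset.mem_insert_of_mem
            (Finset.mem_insert_self _ _))
      · intro he
        rcases Finset.mem_insert.mp he with rfl | he
        · exact hp0
        rcases Finset.mem_insert.mp he with rfl | he
        · exact hp1
        rcases Finset.mem_insert.mp he with rfl | he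
        · exact hch
        · obtain ⟨i, hi, rfl⟩ := Finset.mem_image.mp he
          exact ((hSmem i).mp hi).2.2
    exact Finset.mem_union_right _ (Finset.mem_image.mpr ⟨S, hSB, hMeq.symm⟩)

end

theorem fams_isSachs (hm : 2 ≤ m) {M : Finset (Sym2 (Fin (m + 3)))}
    (hM : M ∈ fam1 m ∪ fam2 m ∪ fam3 m) : IsSachs (D3 m) M := by
  rcases Finset.mem_union.mp hM with hM | hM
  · rcases Finset.mem_union.mp hM with hM | hM
    · obtain ⟨S, hSmem, rfl⟩ := Finset.mem_image.mp hM
      rw [mem_nocSets] at hSmem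
      exact matching_isSachs (image_pe_subset_edgeSet hSmem.1)
        (deg_le_one_image hSmem.1 hSmem.2)
    · obtain ⟨S, hSmem, rfl⟩ := Finset.mem_image.mp hM
      refine matching_isSachs ?_ (deg_le_one_insert_ch hSmem)
      intro e he
      rcases Finset.mem_insert.mp he with rfl | he
      · exact mem_edgeSet_D3.mpr (Or.inr rfl)
      · exact image_pe_subset_edgeSet
          (fun i hi => ((mem_Bset.mp hSmem).1 i hi).2) e he
  · obtain ⟨S, hSmem, rfl⟩ := Finset.mem_image.mp hM
    exact tri_isSachs hm hSmem

theorem filter_sachs_eq (hm : 2 ≤ m) :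
    Finset.univ.filter (fun M : Finset (Sym2 (Fin (m + 3))) => IsSachs (D3 m) M)
      = fam1 m ∪ fam2 m ∪ fam3 m := by
  ext M
  rw [Finset.mem_filter]
  constructor
  · rintro ⟨-, hS⟩
    exact sachs_mem_fams hm hS
  · intro hM
    exact ⟨Finset.mem_univ _, fams_isSachs hm hM⟩

-- membership tests to distinguish the families
theorem ch_not_mem_fam1 (hm : 2 ≤ m) {M : Finset (Sym2 (Fin (m + 3)))} (hM : M ∈ fam1 m) :
    ch m ∉ M := by
  obtain ⟨S, hSmem, rfl⟩ := Finset.mem_image.mp hM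
  rw [mem_nocSets] at hSmem
  intro h
  obtain ⟨i, hi, hpe⟩ := Finset.mem_image.mp h
  exact pe_ne_ch (by have := hSmem.1 i hi; omega) hpe

theorem pe0_not_mem_fam2 (hm : 2 ≤ m) {M : Finset (Sym2 (Fin (m + 3)))} (hM : M ∈ fam2 m) :
    pe m 0 ∉ M := by
  obtain ⟨S, hSmem, rfl⟩ := Finset.mem_image.mp hM
  rw [mem_Bset] at hSmem
  intro h
  rcases Finset.mem_insert.mp h with h | h
  · exact pe_ne_ch (by omega) h
  · obtain ⟨i, hi, hpe⟩ := Finset.mem_image.mp h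
    have := pe_inj (by have := (hSmem.1 i hi).2; omega) (by omega) hpe
    have := (hSmem.1 i hi).1
    omega

theorem fam_cards (hm : 2 ≤ m) :
    (fam1 m).card = (nocSets (m + 2)).card ∧ (fam2 m).card = (Bset m).card ∧
      (fam3 m).card = (Bset m).card := by
  refine ⟨?_, ?_, ?_⟩
  · apply Finset.card_image_of_injOn
    intro S hSm T hTm h
    rw [Finset.mem_coe, mem_nocSets] at hSm hTm
    ext i
    constructor
    · intro hi
      have : pe m i ∈ T.image (pe m) := by
        have h' : S.image (pe m) = T.image (pe m) := h
        exact h' ▸ Finset.mem_image_of_mem _ hi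
      obtain ⟨j, hj, hpe⟩ := Finset.mem_image.mp this
      rwa [pe_inj (by have := hSm.1 i hi; omega) (by have := hTm.1 j hj; omega) hpe.symm]
    · intro hi
      have : pe m i ∈ S.image (pe m) := by
        have h' : T.image (pe m) = S.image (pe m) := h.symm
        exact h' ▸ Finset.mem_image_of_mem _ hi
      obtain ⟨j, hj, hpe⟩ := Finset.mem_image.mp this
      rwa [pe_inj (by have := hTm.1 i hi; omega) (by have := hSm.1 j hj; omega) hpe.symm]
  · apply Finset.card_image_of_injOn
    intro S hSm T hTm h
    rw [Finset.mem_coe, mem_Bset] at hSm hTm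
    have key : ∀ (A B : Finset ℕ), (∀ i ∈ A, 3 ≤ i ∧ i < m + 2) →
        (∀ i ∈ B, 3 ≤ i ∧ i < m + 2) →
        insert (ch m) (A.image (pe m)) = insert (ch m) (B.image (pe m)) →
        ∀ i ∈ A, i ∈ B := by
      intro A B hA hB hab i hi
      have : pe m i ∈ insert (ch m) (B.image (pe m)) :=
        hab ▸ Finset.mem_insert_of_mem (Finset.mem_image_of_mem _ hi)
      rcases Finset.mem_insert.mp this with hc | hmm
      · exact absurd hc (pe_ne_ch (by have := hA i hi; omega))
      · obtain ⟨j, hj, hpe⟩ := Finset.mem_image.mp hmm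
        rwa [pe_inj (by have := hA i hi; omega) (by have := hB j hj; omega) hpe.symm]
    exact Finset.Subset.antisymm (fun i hi => key S T hSm.1 hTm.1 h i hi)
      (fun i hi => key T S hTm.1 hSm.1 h.symm i hi)
  · apply Finset.card_image_of_injOn
    intro S hSm T hTm h
    rw [Finset.mem_coe, mem_Bset] at hSm hTm
    have key : ∀ (A B : Finset ℕ), (∀ i ∈ A, 3 ≤ i ∧ i < m + 2) →
        (∀ i ∈ B, 3 ≤ i ∧ i < m + 2) → tri m A = tri m B → ∀ i ∈ A, i ∈ B := by
      intro A B hA hB hab i hi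
      have h3 : 3 ≤ i := (hA i hi).1
      have hilt : i < m + 2 := (hA i hi).2
      have : pe m i ∈ tri m B := by
        rw [← hab, tri]
        exact Finset.mem_insert_of_mem (Finset.mem_insert_of_mem
          (Finset.mem_insert_of_mem (Finset.mem_image_of_mem _ hi)))
      rw [tri] at this
      rcases Finset.mem_insert.mp this with hc | this
      · have := pe_inj (by omega) (by omega) hc; omega
      rcases Finset.mem_insert.mp this with hc | this
      · have := pe_inj (by omega) (by omega) hc; omega
      rcases Finset.mem_insert.mp this with hc | this
      · exact absurd hc (pe_ne_ch (by omega))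
      · obtain ⟨j, hj, hpe⟩ := Finset.mem_image.mp this
        rwa [pe_inj (by omega) (by have := hB j hj; omega) hpe.symm]
    exact Finset.Subset.antisymm (fun i hi => key S T hSm.1 hTm.1 h i hi)
      (fun i hi => key T S hTm.1 hSm.1 h.symm i hi)

theorem card_Bset (hm : 2 ≤ m) : (Bset m).card = Nat.fib (m + 1) := by
  have : (Bset m).card = (nocSets (m - 1)).card := by
    apply Finset.card_bij (fun (T : Finset ℕ) _ => T.image (fun i => i - 3))
    · intro T hT
      rw [mem_Bset] at hT
      rw [mem_nocSets]
      constructor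
      · intro j hj
        obtain ⟨i, hi, rfl⟩ := Finset.mem_image.mp hj
        have := hT.1 i hi
        omega
      · intro j hj hj1
        obtain ⟨i, hi, rfl⟩ := Finset.mem_image.mp hj
        obtain ⟨i', hi', he⟩ := Finset.mem_image.mp hj1
        have h1 := hT.1 i hi
        have h2 := hT.1 i' hi'
        have : i' = i + 1 := by omega
        exact hT.2 i hi (this ▸ hi')
    · intro T hT T' hT' h
      rw [mem_Bset] at hT hT'
      have key : ∀ (A B : Finset ℕ), (∀ i ∈ A, 3 ≤ i ∧ i < m + 2) →
          (∀ i ∈ B, 3 ≤ i ∧ i < m + 2) →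
          A.image (fun i => i - 3) = B.image (fun i => i - 3) → ∀ i ∈ A, i ∈ B := by
        intro A B hA hB hab i hi
        have : i - 3 ∈ B.image (fun i => i - 3) := hab ▸ Finset.mem_image_of_mem _ hi
        obtain ⟨j, hj, hje⟩ := Finset.mem_image.mp this
        have := hA i hi
        have := hB j hj
        have : j = i := by omega
        exact this ▸ hj
      exact Finset.Subset.antisymm (fun i hi => key T T' hT.1 hT'.1 h i hi)
        (fun i hi => key T' T hT'.1 hT.1 h.symm i hi)
    · intro S hSm
      rw [mem_nocSets] at hSm
      refine ⟨S.image (fun i => i + 3), ?_, ?_⟩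
      · rw [mem_Bset]
        constructor
        · intro i hi
          obtain ⟨j, hj, rfl⟩ := Finset.mem_image.mp hi
          have := hSm.1 j hj
          omega
        · intro i hi hi1
          obtain ⟨j, hj, rfl⟩ := Finset.mem_image.mp hi
          obtain ⟨j', hj', he⟩ := Finset.mem_image.mp hi1
          have : j' = j + 1 := by omega
          exact hSm.2 j hj (this ▸ hj')
      · ext j
        constructor
        · intro hj
          obtain ⟨i, hi, rfl⟩ := Finset.mem_image.mp hj
          obtain ⟨j', hj', rfl⟩ := Finset.mem_image.mp hi
          simpa using hj'
        · intro hj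
          exact Finset.mem_image.mpr ⟨j + 3, Finset.mem_image_of_mem _ hj, by omega⟩
  rw [this, card_nocSets]
  congr 1
  omega

theorem numCycles_fam12 {M : Finset (Sym2 (Fin (m + 3)))}
    (hM : M ∈ fam1 m ∪ fam2 m) : numCycles M = 0 := by
  apply numCycles_eq_zero
  rcases Finset.mem_union.mp hM with hM | hM
  · obtain ⟨S, hSmem, rfl⟩ := Finset.mem_image.mp hM
    rw [mem_nocSets] at hSmem
    exact deg_le_one_image hSmem.1 hSmem.2
  · obtain ⟨S, hSmem, rfl⟩ := Finset.mem_image.mp hM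
    exact deg_le_one_insert_ch hSmem

theorem numCycles_fam3 (hm : 2 ≤ m) {M : Finset (Sym2 (Fin (m + 3)))}
    (hM : M ∈ fam3 m) : numCycles M = 1 := by
  obtain ⟨S, hSmem, rfl⟩ := Finset.mem_image.mp hM
  exact numCycles_tri hm hSmem

theorem fams_disj1 (hm : 2 ≤ m) : Disjoint (fam1 m ∪ fam2 m) (fam3 m) := by
  rw [Finset.disjoint_left]
  intro M hM hM3
  obtain ⟨S, hSmem, rfl⟩ := Finset.mem_image.mp hM3
  rcases Finset.mem_union.mp hM with hM | hM
  · exact ch_not_mem_fam1 hm hM (Finset.mem_insert_of_mem (Finset.mem_insert_of_mem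
      (Finset.mem_insert_self _ _)))
  · exact pe0_not_mem_fam2 hm hM (Finset.mem_insert_self _ _)

theorem fams_disj2 (hm : 2 ≤ m) : Disjoint (fam1 m) (fam2 m) := by
  rw [Finset.disjoint_left]
  intro M hM1 hM2
  obtain ⟨S, hSmem, rfl⟩ := Finset.mem_image.mp hM2
  exact ch_not_mem_fam1 hm hM1 (Finset.mem_insert_self _ _)

/-- `PS(D(3, n-3)) = 6·F(n-2) + 2·F(n-3)` for `n ≥ 5` (here `n = m + 3`, `m ≥ 2`). -/
theorem PS_D3 (m : ℕ) (hm : 2 ≤ m) :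
    PS (D3 m) = 6 * Nat.fib (m + 1) + 2 * Nat.fib m := by
  rw [PS, filter_sachs_eq hm, Finset.sum_union (fams_disj1 hm),
    Finset.sum_union (fams_disj2 hm)]
  have s1 : ∑ M ∈ fam1 m, 2 ^ numCycles M = (fam1 m).card * 1 :=
    Finset.sum_const_nat (fun M hM => by
      rw [numCycles_fam12 (Finset.mem_union_left _ hM), pow_zero])
  have s2 : ∑ M ∈ fam2 m, 2 ^ numCycles M = (fam2 m).card * 1 :=
    Finset.sum_const_nat (fun M hM => by
      rw [numCycles_fam12 (Finset.mem_union_right _ hM), pow_zero])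
  have s3 : ∑ M ∈ fam3 m, 2 ^ numCycles M = (fam3 m).card * 2 :=
    Finset.sum_const_nat (fun M hM => by
      rw [numCycles_fam3 hm hM, pow_one])
  obtain ⟨h1, h2, h3⟩ := fam_cards (m := m) hm
  rw [s1, s2, s3, h1, h2, h3, card_Bset hm, card_nocSets]
  have f1 : Nat.fib (m + 2 + 2) = Nat.fib (m + 2) + Nat.fib (m + 2 + 1) := Nat.fib_add_two
  have f2 : Nat.fib (m + 2 + 1) = Nat.fib (m + 1) + Nat.fib (m + 1 + 1) := Nat.fib_add_two
  have f3 : Nat.fib (m + 1 + 1) = Nat.fib m + Nat.fib (m + 0 + 1) := Nat.fib_add_two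
  have f4 : Nat.fib (m + 0 + 1) = Nat.fib (m + 1) := by norm_num
  have f5 : Nat.fib (m + 2) = Nat.fib (m + 1 + 1) := by norm_num
  omega


end PermSum
end
end

section
/- For integers t ≥ 5 and m ≥ 1 with n = m + t ≥ 7, F(m+1)·(6·F(t−2) + 2·F(t−3)) < 6·F(n−2). -/
/-- For `t ≥ 5`, `m ≥ 1` with `n = m + t ≥ 7`,
`F(m+1)·(6·F(t-2) + 2·F(t-3)) < 6·F(n-2)`. -/
theorem fib_ineq_stmt16 (m t n : ℕ) (ht : 5 ≤ t) (hm : 1 ≤ m) (hn : n = m + t)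
    (hn7 : 7 ≤ n) :
    Nat.fib (m + 1) * (6 * Nat.fib (t - 2) + 2 * Nat.fib (t - 3)) < 6 * Nat.fib (n - 2) := by
  obtain ⟨b, rfl⟩ : ∃ b, t = b + 3 := ⟨t - 3, by omega⟩
  have hb : 2 ≤ b := by omega
  have h1 : n - 2 = m + b + 1 := by omega
  have h2 : b + 3 - 2 = b + 1 := by omega
  have h3 : b + 3 - 3 = b := by omega
  rw [h1, h2, h3, Nat.fib_add]
  have hfm : 0 < Nat.fib m := Nat.fib_pos.mpr hm
  have hfb : 0 < Nat.fib b := Nat.fib_pos.mpr (by omega)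
  have hle : Nat.fib (m + 1) ≤ 2 * Nat.fib m := by
    obtain ⟨k, rfl⟩ : ∃ k, m = k + 1 := ⟨m - 1, by omega⟩
    have := Nat.fib_le_fib_succ (n := k)
    simp [Nat.fib_add_two]; omega
  have key : 2 * Nat.fib (m + 1) * Nat.fib b < 6 * (Nat.fib m * Nat.fib b) := by
    have : 2 * Nat.fib (m + 1) ≤ 4 * Nat.fib m := by omega
    calc 2 * Nat.fib (m + 1) * Nat.fib b ≤ 4 * Nat.fib m * Nat.fib b :=
          Nat.mul_le_mul_right _ this
      _ < 6 * (Nat.fib m * Nat.fib b) := by nlinarith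
  nlinarith [Nat.mul_le_mul_right (Nat.fib (b+1)) hle]
end
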